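/- arXiv:1412.6176 — 4 statements merged into one kernel-verified Lean document; each statement's English description precedes it below -/
import Mathlib

section
/- Let p be a prime and N a normal subgroup of P_n of depth j. Then the commutator subgroup [T_j, T_j] is contained in N. -/
variable (p n : ℕ)

/-- The underlying function of the generator `σ_i`. -/
def sigmaFun (i : Fin n) (lam : Fin n → ZMod p) : Fin n → ZMod p :=
  fun k => if k = i ∧ ∀ j : Fin n, j < i → lam j = 0 then lam k + 1 else lam k

lemma sigmaFun_apply_ne (i : Fin n) (lam : Fin n → ZMod p) {k : Fin n} (h : k ≠ i) :
    sigmaFun p n i lam k = lam k := by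
  simp [sigmaFun, h]

/-- The inverse function of `σ_i`. -/
def sigmaInvFun (i : Fin n) (lam : Fin n → ZMod p) : Fin n → ZMod p :=
  fun k => if k = i ∧ ∀ j : Fin n, j < i → lam j = 0 then lam k - 1 else lam k

lemma sigmaInvFun_apply_ne (i : Fin n) (lam : Fin n → ZMod p) {k : Fin n} (h : k ≠ i) :
    sigmaInvFun p n i lam k = lam k := by
  simp [sigmaInvFun, h]

lemma sigmaFun_cond (i : Fin n) (lam : Fin n → ZMod p) :
    (∀ j : Fin n, j < i → sigmaFun p n i lam j = 0) ↔ (∀ j : Fin n, j < i → lam j = 0) := by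
  constructor
  · intro h j hj
    have := h j hj
    rwa [sigmaFun_apply_ne p n i lam (ne_of_lt hj)] at this
  · intro h j hj
    rw [sigmaFun_apply_ne p n i lam (ne_of_lt hj)]
    exact h j hj

lemma sigmaInvFun_cond (i : Fin n) (lam : Fin n → ZMod p) :
    (∀ j : Fin n, j < i → sigmaInvFun p n i lam j = 0) ↔ (∀ j : Fin n, j < i → lam j = 0) := by
  constructor
  · intro h j hj
    have := h j hj
    rwa [sigmaInvFun_apply_ne p n i lam (ne_of_lt hj)] at this
  · intro h j hj
    rw [sigmaInvFun_apply_ne p n i lam (ne_of_lt hj)]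
    exact h j hj

/-- The generator `σ_i` of the Sylow `p`-subgroup of `Sym(F_p^n)`: it fixes
`(λ_0, …, λ_{n-1})` if `λ_j ≠ 0` for some `j < i`, and otherwise replaces the entry
`λ_i` by `λ_i + 1`. -/
def sigmaPerm (i : Fin n) : Equiv.Perm (Fin n → ZMod p) where
  toFun := sigmaFun p n i
  invFun := sigmaInvFun p n i
  left_inv := by
    intro lam
    funext k
    by_cases hk : k = i
    · subst hk
      show sigmaInvFun p n k (sigmaFun p n k lam) k = lam k
      by_cases hc : ∀ j : Fin n, j < k → lam j = 0
      · have hC : ∀ j : Fin n, j < k → sigmaFun p n k lam j = 0 :=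
          (sigmaFun_cond p n k lam).mpr hc
        unfold sigmaInvFun
        rw [if_pos ⟨rfl, hC⟩]
        unfold sigmaFun
        rw [if_pos ⟨rfl, hc⟩]
        ring
      · have hC : ¬ ∀ j : Fin n, j < k → sigmaFun p n k lam j = 0 :=
          fun h => hc ((sigmaFun_cond p n k lam).mp h)
        unfold sigmaInvFun
        rw [if_neg (by tauto)]
        unfold sigmaFun
        rw [if_neg (by tauto)]
    · exact (sigmaInvFun_apply_ne p n i _ hk).trans (sigmaFun_apply_ne p n i lam hk)
  right_inv := by
    intro lam
    funext k
    by_cases hk : k = i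
    · subst hk
      show sigmaFun p n k (sigmaInvFun p n k lam) k = lam k
      by_cases hc : ∀ j : Fin n, j < k → lam j = 0
      · have hC : ∀ j : Fin n, j < k → sigmaInvFun p n k lam j = 0 :=
          (sigmaInvFun_cond p n k lam).mpr hc
        unfold sigmaFun
        rw [if_pos ⟨rfl, hC⟩]
        unfold sigmaInvFun
        rw [if_pos ⟨rfl, hc⟩]
        ring
      · have hC : ¬ ∀ j : Fin n, j < k → sigmaInvFun p n k lam j = 0 :=
          fun h => hc ((sigmaInvFun_cond p n k lam).mp h)
        unfold sigmaFun
        rw [if_neg (by tauto)]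
        unfold sigmaInvFun
        rw [if_neg (by tauto)]
    · exact (sigmaFun_apply_ne p n i _ hk).trans (sigmaInvFun_apply_ne p n i lam hk)

/-- `P_n = ⟨σ_0, …, σ_{n-1}⟩`, a Sylow `p`-subgroup of `Sym(F_p^n)`. -/
def PSyl : Subgroup (Equiv.Perm (Fin n → ZMod p)) :=
  Subgroup.closure (Set.range (sigmaPerm p n))


/-- Weir's filtration subgroup `T_j`: the normal closure in `P_n` of
`⟨σ_j, …, σ_{n-1}⟩`, i.e. the subgroup generated by all `P_n`-conjugates of the
`σ_i` with `i ≥ j`. -/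
def TFilt (j : ℕ) : Subgroup (Equiv.Perm (Fin n → ZMod p)) :=
  Subgroup.closure
    {x | ∃ g ∈ PSyl p n, ∃ i : Fin n, j ≤ (i : ℕ) ∧ x = g * sigmaPerm p n i * g⁻¹}

/-!
For `j ≤ k` and a level-`j` block `B`, summing over the level-`k` subblocks of `B` the
translation that `g ∈ T_j` applies to coordinate `k` gives a homomorphism `T_j → ℤ/p`, which
therefore vanishes on `[T_j, T_j]`. So it suffices to show that every `g ∈ T_j` all of whose sums
vanish lies in `N`, and restricting `g` to the level-`j` blocks we may assume it lives in one.

As `N ⊄ T_{j+1}`, some `x ∈ N` translates coordinate `j` nontrivially, and a power of a conjugate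
of `x` is a `z ∈ N` translating coordinate `j` by `1` on the chosen block. Modulo `N` everything
supported on the block commutes with `z`, so conjugating by powers of `z` pushes the pieces of
`g` on the `p` child blocks into one child without changing the sums. In a block of level
`m > j`, the standard translation of coordinate `m` plays the role of `z`: it commutes modulo `N`
with everything supported on the block, because conjugating by `z` moves one factor to a
disjoint sibling block. Descending to level `n`, where blocks are points, leaves the identity.
-/

theorem Equiv.Perm.apply_inv_self {α : Type*} (f : Equiv.Perm α) (x : α) : f (f⁻¹ x) = x :=
  f.apply_symm_apply x

theorem Equiv.Perm.inv_apply_self {α : Type*} (f : Equiv.Perm α) (x : α) : f⁻¹ (f x) = x :=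
  f.symm_apply_apply x

namespace Weir

section Support

variable {X : Type*}

def SupportedOn (g : Equiv.Perm X) (s : Set X) : Prop := ∀ x ∉ s, g x = x

namespace SupportedOn

variable {g h : Equiv.Perm X} {s t : Set X}

theorem mul (hg : SupportedOn g s) (hh : SupportedOn h s) : SupportedOn (g * h) s :=
  fun x hx => by rw [Equiv.Perm.mul_apply, hh x hx, hg x hx]

theorem mono (hg : SupportedOn g s) (hst : s ⊆ t) : SupportedOn g t :=
  fun x hx => hg x fun h => hx (hst h)

theorem apply_mem (hg : SupportedOn g s) {x : X} (hx : x ∈ s) : g x ∈ s := by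
  by_contra h
  rw [g.injective (hg _ h)] at h
  exact h hx

theorem conj (hg : SupportedOn g s) (h : Equiv.Perm X) : SupportedOn (h * g * h⁻¹) (h '' s) := by
  intro x hx
  have : h⁻¹ x ∉ s := fun hs => hx ⟨_, hs, Equiv.Perm.apply_inv_self h x⟩
  rw [Equiv.Perm.mul_apply, Equiv.Perm.mul_apply, hg _ this, Equiv.Perm.apply_inv_self]

theorem commute (hg : SupportedOn g s) (hh : SupportedOn h t) (hst : Disjoint s t) :
    Commute g h :=
  Equiv.Perm.Disjoint.commute fun x => by
    by_cases hx : x ∈ s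
    exacts [Or.inr (hh x (Set.disjoint_left.mp hst hx)), Or.inl (hg x hx)]

theorem eq_one (hg : SupportedOn g s) (hs : s.Subsingleton) : g = 1 :=
  Equiv.ext fun x => by
    by_cases hx : x ∈ s
    exacts [hs (hg.apply_mem hx) hx, hg x hx]

end SupportedOn

end Support

section Prefix

variable {α : Type*} {n : ℕ}

def AgreeBelow (k : ℕ) (a b : Fin n → α) : Prop := ∀ i : Fin n, (i : ℕ) < k → a i = b i

namespace AgreeBelow

variable {k : ℕ} {a b c : Fin n → α}

protected theorem refl (a : Fin n → α) : AgreeBelow k a a := fun _ _ => rfl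

protected theorem symm (h : AgreeBelow k a b) : AgreeBelow k b a := fun i hi => (h i hi).symm

protected theorem trans (h : AgreeBelow k a b) (h' : AgreeBelow k b c) : AgreeBelow k a c :=
  fun i hi => (h i hi).trans (h' i hi)

theorem mono {k' : ℕ} (hk : k' ≤ k) (h : AgreeBelow k a b) : AgreeBelow k' a b :=
  fun i hi => h i (hi.trans_le hk)

end AgreeBelow

theorem agreeBelow_zero (a b : Fin n → α) : AgreeBelow 0 a b :=
  fun _ hi => absurd hi (Nat.not_lt_zero _)

theorem agreeBelow_succ_iff {m : ℕ} (hm : m < n) {a b : Fin n → α} :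
    AgreeBelow (m + 1) a b ↔ AgreeBelow m a b ∧ a ⟨m, hm⟩ = b ⟨m, hm⟩ := by
  refine ⟨fun h => ⟨h.mono m.le_succ, h _ m.lt_succ_self⟩, fun ⟨h, hm'⟩ i hi => ?_⟩
  rcases Nat.lt_succ_iff_lt_or_eq.mp hi with hi | hi
  · exact h i hi
  · obtain rfl : i = ⟨m, hm⟩ := Fin.ext hi
    exact hm'

theorem agreeBelow_succ_iff_of_le {m : ℕ} (hm : n ≤ m) {a b : Fin n → α} :
    AgreeBelow (m + 1) a b ↔ AgreeBelow m a b :=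
  ⟨AgreeBelow.mono m.le_succ, fun h i _ => h i (by omega)⟩

theorem agreeBelow_update {m : ℕ} (hm : m < n) (γ : Fin n → α) (c : α) :
    AgreeBelow m (Function.update γ ⟨m, hm⟩ c) γ :=
  fun i hi => Function.update_of_ne (fun h => by subst h; exact lt_irrefl _ hi) c γ

def block (k : ℕ) (β : Fin n → α) : Set (Fin n → α) := {x | AgreeBelow k x β}

theorem block_mono {k k' : ℕ} (hk : k' ≤ k) (β : Fin n → α) : block k β ⊆ block k' β :=
  fun _ hx => hx.mono hk

theorem block_eq_of_agreeBelow {k : ℕ} {β β' : Fin n → α} (h : AgreeBelow k β β') :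
    block k β = block k β' :=
  Set.ext fun _ => ⟨fun hx => hx.trans h, fun hx => hx.trans h.symm⟩

theorem mem_block_succ_update_iff {m : ℕ} (hm : m < n) {γ x : Fin n → α} {a : α} :
    x ∈ block (m + 1) (Function.update γ ⟨m, hm⟩ a) ↔ x ∈ block m γ ∧ x ⟨m, hm⟩ = a := by
  rw [block, Set.mem_ofPred_eq, agreeBelow_succ_iff hm, Function.update_self]
  exact and_congr_left fun _ => ⟨fun h => h.trans (agreeBelow_update hm γ a),
    fun h => h.trans (agreeBelow_update hm γ a).symm⟩

theorem block_length_subsingleton (β : Fin n → α) : (block n β).Subsingleton :=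
  fun _ hx _ hy => funext fun i => (hx i i.isLt).trans (hy i i.isLt).symm

def fixingCoords (s : Set (Fin n)) : Subgroup (Equiv.Perm (Fin n → α)) where
  carrier := {g | ∀ x, ∀ i ∈ s, g x i = x i}
  one_mem' _ _ _ := rfl
  mul_mem' {a b} ha hb x i hi := by rw [Equiv.Perm.mul_apply, ha _ i hi, hb x i hi]
  inv_mem' {a} ha x i hi := by
    conv_rhs => rw [← Equiv.Perm.apply_inv_self a x]
    exact (ha _ i hi).symm

theorem eq_one_of_mem_fixingCoords_compl {s : Set (Fin n)} {g : Equiv.Perm (Fin n → α)}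
    (h : g ∈ fixingCoords s) (h' : g ∈ fixingCoords sᶜ) : g = 1 :=
  Equiv.ext fun x => funext fun i => by
    by_cases hi : i ∈ s
    exacts [h x i hi, h' x i hi]

abbrev prefixStab (k : ℕ) : Subgroup (Equiv.Perm (Fin n → α)) :=
  fixingCoords {i | (i : ℕ) < k}

theorem mem_prefixStab {k : ℕ} {g : Equiv.Perm (Fin n → α)} :
    g ∈ prefixStab k ↔ ∀ x, AgreeBelow k (g x) x :=
  Iff.rfl

theorem apply_mem_block_iff {k : ℕ} {g : Equiv.Perm (Fin n → α)} (hg : g ∈ prefixStab k)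
    (β x : Fin n → α) : g x ∈ block k β ↔ x ∈ block k β :=
  ⟨(mem_prefixStab.1 hg x).symm.trans, (mem_prefixStab.1 hg x).trans⟩

end Prefix

section Triangular

variable {p n : ℕ}

/-- Kaloujnine's triangular permutations; they form exactly `P_n`. -/
def IsTriangular (g : Equiv.Perm (Fin n → ZMod p)) : Prop :=
  ∀ (i : Fin n) (a b : Fin n → ZMod p), AgreeBelow i a b → g a i - a i = g b i - b i

theorem IsTriangular.agreeBelow_apply_iff {g : Equiv.Perm (Fin n → ZMod p)}
    (hg : IsTriangular g) (k : ℕ) (a b : Fin n → ZMod p) :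
    AgreeBelow k (g a) (g b) ↔ AgreeBelow k a b := by
  induction k with
  | zero => exact iff_of_true (agreeBelow_zero _ _) (agreeBelow_zero _ _)
  | succ k ih =>
    by_cases hk : k < n
    · rw [agreeBelow_succ_iff hk, agreeBelow_succ_iff hk, ih]
      refine and_congr_right fun hab => ?_
      have hshift := hg ⟨k, hk⟩ a b hab
      constructor <;> intro h
      · linear_combination h - hshift
      · linear_combination hshift + h
    · rw [agreeBelow_succ_iff_of_le (not_lt.1 hk), agreeBelow_succ_iff_of_le (not_lt.1 hk), ih]

def triangular : Subgroup (Equiv.Perm (Fin n → ZMod p)) where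
  carrier := {g | IsTriangular g}
  one_mem' _ _ _ _ := by simp
  mul_mem' {g h} hg hh i a b hab := by
    have h₁ := hg i (h a) (h b) ((hh.agreeBelow_apply_iff i a b).2 hab)
    have h₂ := hh i a b hab
    simp only [Equiv.Perm.mul_apply]
    linear_combination h₁ + h₂
  inv_mem' {g} hg i a b hab := by
    have hab' : AgreeBelow i (g⁻¹ a) (g⁻¹ b) := by
      rw [← hg.agreeBelow_apply_iff, Equiv.Perm.apply_inv_self, Equiv.Perm.apply_inv_self]
      exact hab
    have h := hg i _ _ hab'
    rw [Equiv.Perm.apply_inv_self, Equiv.Perm.apply_inv_self] at h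
    linear_combination -h

theorem agreeBelow_apply_iff {g : Equiv.Perm (Fin n → ZMod p)} (hg : g ∈ triangular) (k : ℕ)
    (a b : Fin n → ZMod p) : AgreeBelow k (g a) (g b) ↔ AgreeBelow k a b :=
  IsTriangular.agreeBelow_apply_iff hg k a b

theorem image_block_subset {g : Equiv.Perm (Fin n → ZMod p)} (hg : g ∈ triangular) (k : ℕ)
    (β : Fin n → ZMod p) : g '' block k β ⊆ block k (g β) := by
  rintro _ ⟨x, hx, rfl⟩
  exact (agreeBelow_apply_iff hg k x β).2 hx

end Triangular

section Generators

variable {p n : ℕ}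

theorem sigmaPerm_apply_of_ne {i k : Fin n} (h : k ≠ i) (x : Fin n → ZMod p) :
    sigmaPerm p n i x k = x k :=
  sigmaFun_apply_ne p n i x h

theorem sigmaPerm_apply_self {i : Fin n} {x : Fin n → ZMod p} (hx : ∀ j < i, x j = 0) :
    sigmaPerm p n i x i = x i + 1 :=
  if_pos ⟨rfl, hx⟩

theorem sigmaPerm_apply_eq_self {i : Fin n} {x : Fin n → ZMod p} (hx : ¬ ∀ j < i, x j = 0) :
    sigmaPerm p n i x = x :=
  funext fun _ => if_neg fun h => hx h.2

theorem sigmaPerm_supportedOn (i : Fin n) : SupportedOn (sigmaPerm p n i) (block i 0) :=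
  fun _ hx => sigmaPerm_apply_eq_self fun h => hx fun j hj => h j hj

theorem sigmaPerm_mem_triangular (i : Fin n) : sigmaPerm p n i ∈ triangular := by
  intro k a b hab
  rcases eq_or_ne k i with rfl | hk
  · have hpre : (∀ j < k, a j = 0) ↔ (∀ j < k, b j = 0) :=
      forall₂_congr fun j hj => by rw [hab j hj]
    by_cases ha : ∀ j < k, a j = 0
    · rw [sigmaPerm_apply_self ha, sigmaPerm_apply_self (hpre.1 ha)]
      ring
    · rw [sigmaPerm_apply_eq_self ha, sigmaPerm_apply_eq_self (mt hpre.2 ha), sub_self, sub_self]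
  · rw [sigmaPerm_apply_of_ne hk, sigmaPerm_apply_of_ne hk, sub_self, sub_self]

theorem sigmaPerm_mem_prefixStab {i : Fin n} {k : ℕ} (hk : k ≤ i) :
    sigmaPerm p n i ∈ prefixStab k :=
  fun x j (hj : (j : ℕ) < k) => sigmaPerm_apply_of_ne (Fin.ne_of_lt (Fin.lt_def.2 (by omega))) x

theorem sigmaPerm_mem_fixingCoords {i : Fin n} {k : ℕ} (hk : (i : ℕ) < k) :
    sigmaPerm p n i ∈ fixingCoords {j | k ≤ (j : ℕ)} :=
  fun x j (hj : k ≤ (j : ℕ)) => sigmaPerm_apply_of_ne (Fin.ne_of_gt (Fin.lt_def.2 (by omega))) x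

theorem sigmaPerm_pow_apply {i : Fin n} {x : Fin n → ZMod p} (hx : ∀ j < i, x j = 0) (v : ℕ) :
    (sigmaPerm p n i ^ v) x = Function.update x i (x i + v) := by
  induction v with
  | zero => simp
  | succ v ih =>
    have hx' : ∀ j < i, Function.update x i (x i + v) j = 0 := fun j hj => by
      rw [Function.update_of_ne hj.ne]
      exact hx j hj
    rw [pow_succ', Equiv.Perm.mul_apply, ih]
    funext k
    rcases eq_or_ne k i with rfl | hk
    · rw [sigmaPerm_apply_self hx', Function.update_self, Function.update_self]
      push_cast
      ring
    · rw [sigmaPerm_apply_of_ne hk, Function.update_of_ne hk, Function.update_of_ne hk]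

theorem sigmaPerm_mem_PSyl (i : Fin n) : sigmaPerm p n i ∈ PSyl p n :=
  Subgroup.subset_closure ⟨i, rfl⟩

theorem PSyl_le_triangular : PSyl p n ≤ triangular :=
  (Subgroup.closure_le _).mpr <| Set.range_subset_iff.2 sigmaPerm_mem_triangular

theorem exists_mem_PSyl_apply_zero_eq [NeZero p] (γ : Fin n → ZMod p) :
    ∃ h ∈ PSyl p n, h 0 = γ := by
  suffices key : ∀ d m, m + d = n → ∀ x : Fin n → ZMod p, AgreeBelow m x 0 →
      ∃ h ∈ PSyl p n, h 0 = x from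
    key n 0 (zero_add n) γ (agreeBelow_zero _ _)
  intro d
  induction d with
  | zero =>
    intro m hm x hx
    exact ⟨1, one_mem _, funext fun i => (hx i (by omega)).symm⟩
  | succ d ih =>
    intro m hm x hx
    have hmn : m < n := by omega
    set i : Fin n := ⟨m, hmn⟩
    have hx' : AgreeBelow (m + 1) (Function.update x i 0) 0 :=
      (agreeBelow_succ_iff hmn).2 ⟨(agreeBelow_update hmn x 0).trans hx, Function.update_self ..⟩
    obtain ⟨h, hh, hh0⟩ := ih (m + 1) (by omega) _ hx'
    refine ⟨sigmaPerm p n i ^ (x i).val * h, mul_mem (pow_mem (sigmaPerm_mem_PSyl i) _) hh, ?_⟩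
    rw [Equiv.Perm.mul_apply, hh0, sigmaPerm_pow_apply (fun j hj => hx'.mono m.le_succ j hj),
      Function.update_self, zero_add, ZMod.natCast_zmod_val, Function.update_idem,
      Function.update_eq_self]

end Generators

section Filtration

variable {p n : ℕ}

theorem conj_sigmaPerm_mem_TFilt {g : Equiv.Perm (Fin n → ZMod p)} (hg : g ∈ PSyl p n)
    {i : Fin n} {k : ℕ} (hk : k ≤ i) : g * sigmaPerm p n i * g⁻¹ ∈ TFilt p n k :=
  Subgroup.subset_closure ⟨g, hg, i, hk, rfl⟩

theorem conj_sigmaPerm_supportedOn {g : Equiv.Perm (Fin n → ZMod p)} (hg : g ∈ PSyl p n)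
    {i : Fin n} {k : ℕ} (hk : k ≤ i) :
    SupportedOn (g * sigmaPerm p n i * g⁻¹) (block k (g 0)) :=
  ((sigmaPerm_supportedOn i).mono (block_mono hk 0)).conj g |>.mono
    (image_block_subset (PSyl_le_triangular hg) k 0)

theorem TFilt_le_PSyl (k : ℕ) : TFilt p n k ≤ PSyl p n :=
  (Subgroup.closure_le _).mpr <| by
    rintro _ ⟨g, hg, i, -, rfl⟩
    exact mul_mem (mul_mem hg (sigmaPerm_mem_PSyl i)) (inv_mem hg)

theorem TFilt_le_triangular (k : ℕ) : TFilt p n k ≤ triangular :=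
  (TFilt_le_PSyl k).trans PSyl_le_triangular

theorem TFilt_le_prefixStab (k : ℕ) : TFilt p n k ≤ prefixStab k :=
  (Subgroup.closure_le _).mpr <| by
    rintro _ ⟨g, hg, i, hk, rfl⟩ x
    have h := (agreeBelow_apply_iff (PSyl_le_triangular hg) k _ _).2
      (sigmaPerm_mem_prefixStab hk (g⁻¹ x))
    rwa [Equiv.Perm.apply_inv_self] at h

theorem TFilt_antitone {k k' : ℕ} (hk : k' ≤ k) : TFilt p n k ≤ TFilt p n k' :=
  Subgroup.closure_mono fun _ ⟨g, hg, i, hi, h⟩ => ⟨g, hg, i, hk.trans hi, h⟩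

theorem TFilt_eq_bot {k : ℕ} (hk : n ≤ k) : TFilt p n k = ⊥ :=
  Subgroup.closure_eq_bot_iff.2 fun _ ⟨_, _, i, hi, _⟩ => absurd i.isLt (by omega)

theorem conj_mem_TFilt {k : ℕ} {h g : Equiv.Perm (Fin n → ZMod p)} (hh : h ∈ PSyl p n)
    (hg : g ∈ TFilt p n k) : h * g * h⁻¹ ∈ TFilt p n k := by
  induction hg using Subgroup.closure_induction with
  | mem _ hx =>
    obtain ⟨g, hg, i, hi, rfl⟩ := hx
    simpa only [mul_assoc, mul_inv_rev] using conj_sigmaPerm_mem_TFilt (mul_mem hh hg) hi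
  | one => simp
  | mul a b _ _ ha hb => simpa only [mul_assoc, inv_mul_cancel_left] using mul_mem ha hb
  | inv a _ ha => simpa only [mul_assoc, mul_inv_rev, inv_inv] using inv_mem ha

theorem exists_mul_eq_of_mem_PSyl (k : ℕ) {g : Equiv.Perm (Fin n → ZMod p)}
    (hg : g ∈ PSyl p n) : ∃ w ∈ PSyl p n, w ∈ fixingCoords {j | k ≤ (j : ℕ)} ∧
      ∃ t ∈ TFilt p n k, g = w * t := by
  induction hg using Subgroup.closure_induction with
  | mem _ hx =>
    obtain ⟨i, rfl⟩ := hx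
    by_cases hik : (i : ℕ) < k
    · exact ⟨_, sigmaPerm_mem_PSyl i, sigmaPerm_mem_fixingCoords hik, 1, one_mem _,
        (mul_one _).symm⟩
    · refine ⟨1, one_mem _, one_mem _, _, ?_, (one_mul _).symm⟩
      simpa using conj_sigmaPerm_mem_TFilt (one_mem _) (not_lt.1 hik)
  | one => exact ⟨1, one_mem _, one_mem _, 1, one_mem _, (one_mul _).symm⟩
  | mul _ _ _ _ ha hb =>
    obtain ⟨w₁, hw₁, hw₁', t₁, ht₁, rfl⟩ := ha
    obtain ⟨w₂, hw₂, hw₂', t₂, ht₂, rfl⟩ := hb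
    refine ⟨w₁ * w₂, mul_mem hw₁ hw₂, mul_mem hw₁' hw₂', w₂⁻¹ * t₁ * w₂ * t₂,
      mul_mem ?_ ht₂, by group⟩
    simpa using conj_mem_TFilt (inv_mem hw₂) ht₁
  | inv _ _ ha =>
    obtain ⟨w, hw, hw', t, ht, rfl⟩ := ha
    exact ⟨w⁻¹, inv_mem hw, inv_mem hw', w * t⁻¹ * w⁻¹, conj_mem_TFilt hw (inv_mem ht),
      by group⟩

theorem mem_TFilt_of_mem_prefixStab {k : ℕ} {g : Equiv.Perm (Fin n → ZMod p)}
    (hg : g ∈ PSyl p n) (hk : g ∈ prefixStab k) : g ∈ TFilt p n k := by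
  obtain ⟨w, -, hw, t, ht, rfl⟩ := exists_mul_eq_of_mem_PSyl k hg
  have hw' : w ∈ prefixStab k := by
    simpa using mul_mem hk (inv_mem (TFilt_le_prefixStab k ht))
  rw [eq_one_of_mem_fixingCoords_compl hw' (by simpa [Set.compl_ofPred] using hw), one_mul]
  exact ht

end Filtration

section Restrict

variable {α : Type*} {n : ℕ} {k : ℕ} {β : Fin n → α} {g h : Equiv.Perm (Fin n → α)}

open Classical

noncomputable def restrictBlock (k : ℕ) (β : Fin n → α) (hg : g ∈ prefixStab k) :
    Equiv.Perm (Fin n → α) :=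
  Equiv.Perm.ofSubtype (g.subtypePerm (apply_mem_block_iff hg β))

theorem restrictBlock_apply_of_mem (hg : g ∈ prefixStab k) {x : Fin n → α}
    (hx : x ∈ block k β) : restrictBlock k β hg x = g x :=
  Equiv.Perm.ofSubtype_subtypePerm_of_mem _ hx

theorem restrictBlock_apply_of_notMem (hg : g ∈ prefixStab k) {x : Fin n → α}
    (hx : x ∉ block k β) : restrictBlock k β hg x = x :=
  Equiv.Perm.ofSubtype_subtypePerm_of_not_mem _ hx

theorem restrictBlock_supportedOn (hg : g ∈ prefixStab k) :
    SupportedOn (restrictBlock k β hg) (block k β) :=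
  fun _ => restrictBlock_apply_of_notMem hg

theorem restrictBlock_mul (hg : g ∈ prefixStab k) (hh : h ∈ prefixStab k)
    (hgh : g * h ∈ prefixStab k) :
    restrictBlock k β hgh = restrictBlock k β hg * restrictBlock k β hh := by
  rw [restrictBlock, restrictBlock, restrictBlock, ← map_mul]
  rfl

theorem restrictBlock_inv (hg : g ∈ prefixStab k) (hg' : g⁻¹ ∈ prefixStab k) :
    restrictBlock k β hg' = (restrictBlock k β hg)⁻¹ := by
  rw [restrictBlock, restrictBlock, ← map_inv]
  rfl

theorem restrictBlock_one (h1 : 1 ∈ prefixStab k) :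
    restrictBlock k β (g := (1 : Equiv.Perm (Fin n → α))) h1 = 1 :=
  map_one Equiv.Perm.ofSubtype

theorem restrictBlock_eq_self (hg : g ∈ prefixStab k) (hgβ : SupportedOn g (block k β)) :
    restrictBlock k β hg = g :=
  Equiv.ext fun x => by
    by_cases hx : x ∈ block k β
    · exact restrictBlock_apply_of_mem hg hx
    · rw [restrictBlock_apply_of_notMem hg hx, hgβ x hx]

theorem restrictBlock_eq_one {β' : Fin n → α} (hg : g ∈ prefixStab k)
    (hgβ' : SupportedOn g (block k β')) (hβ' : β' ∉ block k β) : restrictBlock k β hg = 1 :=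
  Equiv.ext fun x => by
    by_cases hx : x ∈ block k β
    · rw [restrictBlock_apply_of_mem hg hx, Equiv.Perm.one_apply]
      exact hgβ' x fun hx' => hβ' (AgreeBelow.trans (AgreeBelow.symm hx') hx)
    · exact restrictBlock_apply_of_notMem hg hx

theorem supportedOn_mul_inv_restrictBlock (hg : g ∈ prefixStab k) {s : Set (Fin n → α)}
    (hgs : SupportedOn g s) : SupportedOn (g * (restrictBlock k β hg)⁻¹) (s \ block k β) := by
  intro x hx
  rw [Equiv.Perm.mul_apply, ← restrictBlock_inv hg (inv_mem hg)]
  by_cases hxβ : x ∈ block k β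
  · rw [restrictBlock_apply_of_mem _ hxβ, Equiv.Perm.apply_inv_self]
  · rw [restrictBlock_apply_of_notMem _ hxβ]
    exact hgs x fun hxs => hx ⟨hxs, hxβ⟩

end Restrict

theorem restrictBlock_mem_TFilt {p n k : ℕ} {β : Fin n → ZMod p}
    {g : Equiv.Perm (Fin n → ZMod p)} (hg : g ∈ TFilt p n k) :
    restrictBlock k β (TFilt_le_prefixStab k hg) ∈ TFilt p n k := by
  induction hg using Subgroup.closure_induction with
  | mem _ hx =>
    obtain ⟨g, hg, i, hi, rfl⟩ := hx
    by_cases hβ : g 0 ∈ block k β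
    · rw [restrictBlock_eq_self _ (by
        rw [block_eq_of_agreeBelow (AgreeBelow.symm hβ)]
        exact conj_sigmaPerm_supportedOn hg hi)]
      exact conj_sigmaPerm_mem_TFilt hg hi
    · rw [restrictBlock_eq_one _ (conj_sigmaPerm_supportedOn hg hi) hβ]
      exact one_mem _
  | one => simpa only [restrictBlock_one] using one_mem _
  | mul _ _ hg hh ha hb =>
    rw [restrictBlock_mul (TFilt_le_prefixStab k hg) (TFilt_le_prefixStab k hh)]
    exact mul_mem ha hb
  | inv _ hg ha =>
    rw [restrictBlock_inv (TFilt_le_prefixStab k hg)]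
    exact inv_mem ha

section Shift

variable {p n : ℕ}

def shift (g : Equiv.Perm (Fin n → ZMod p)) (k : Fin n) (x : Fin n → ZMod p) : ZMod p :=
  g x k - x k

theorem shift_eq_of_agreeBelow {g : Equiv.Perm (Fin n → ZMod p)} (hg : g ∈ triangular)
    {k : Fin n} {a b : Fin n → ZMod p} (h : AgreeBelow k a b) : shift g k a = shift g k b :=
  hg k a b h

theorem shift_mul (g h : Equiv.Perm (Fin n → ZMod p)) (k : Fin n) (x : Fin n → ZMod p) :
    shift (g * h) k x = shift g k (h x) + shift h k x := by
  simp only [shift, Equiv.Perm.mul_apply]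
  ring

theorem shift_conj {k : Fin n} {g w : Equiv.Perm (Fin n → ZMod p)} (hg : g ∈ triangular)
    (hgk : g ∈ prefixStab k) (hw : w ∈ triangular) {x x₀ : Fin n → ZMod p}
    (hx : AgreeBelow k (w⁻¹ x) x₀) : shift (w * g * w⁻¹) k x = shift g k x₀ := by
  have h₁ := shift_eq_of_agreeBelow hw (mem_prefixStab.1 hgk (w⁻¹ x))
  have h₂ := shift_eq_of_agreeBelow hg hx
  simp only [shift, Equiv.Perm.mul_apply, Equiv.Perm.apply_inv_self] at h₁ h₂ ⊢
  linear_combination h₁ + h₂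

theorem shift_pow {k : Fin n} {y : Equiv.Perm (Fin n → ZMod p)} (hy : y ∈ prefixStab k)
    {β : Fin n → ZMod p} {c : ZMod p} (hc : ∀ x ∈ block k β, shift y k x = c) (v : ℕ)
    {x : Fin n → ZMod p} (hx : x ∈ block k β) : shift (y ^ v) k x = v * c := by
  induction v with
  | zero => simp [shift]
  | succ v ih =>
    have h := hc _ ((apply_mem_block_iff (pow_mem hy v) β x).2 hx)
    simp only [shift, pow_succ', Equiv.Perm.mul_apply] at h ih ⊢
    push_cast
    linear_combination h + ih

theorem shift_inv (g : Equiv.Perm (Fin n → ZMod p)) (k : Fin n) (x : Fin n → ZMod p) :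
    shift g⁻¹ k x = -shift g k (g⁻¹ x) := by
  rw [shift, shift, Equiv.Perm.apply_inv_self]
  ring

theorem mem_prefixStab_succ {m : ℕ} (hm : m < n) {g : Equiv.Perm (Fin n → ZMod p)}
    (hg : g ∈ prefixStab m) (h : ∀ x, shift g ⟨m, hm⟩ x = 0) : g ∈ prefixStab (m + 1) :=
  fun x => (agreeBelow_succ_iff hm).2 ⟨mem_prefixStab.1 hg x, sub_eq_zero.1 (h x)⟩

theorem image_block_update_subset {m : ℕ} (hm : m < n) {z : Equiv.Perm (Fin n → ZMod p)}
    (hz : z ∈ prefixStab m) {γ : Fin n → ZMod p} {d : ZMod p}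
    (hzd : ∀ x ∈ block m γ, shift z ⟨m, hm⟩ x = d) (a : ZMod p) :
    z '' block (m + 1) (Function.update γ ⟨m, hm⟩ a) ⊆
      block (m + 1) (Function.update γ ⟨m, hm⟩ (a + d)) := by
  rintro _ ⟨x, hx, rfl⟩
  rw [mem_block_succ_update_iff] at hx ⊢
  have h := hzd x hx.1
  rw [shift] at h
  exact ⟨(apply_mem_block_iff hz γ x).2 hx.1, by linear_combination h + hx.2⟩

def truncate (k : ℕ) (x : Fin n → ZMod p) : Fin n → ZMod p :=
  fun i => if (i : ℕ) < k then x i else 0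

theorem agreeBelow_truncate (k : ℕ) (x : Fin n → ZMod p) : AgreeBelow k (truncate k x) x :=
  fun _ hi => if_pos hi

theorem truncate_eq_of_agreeBelow {k : ℕ} {a b : Fin n → ZMod p} (h : AgreeBelow k a b) :
    truncate k a = truncate k b :=
  funext fun i => by by_cases hi : (i : ℕ) < k <;> simp [truncate, hi, h i]

theorem truncate_eq_self {k : ℕ} {x : Fin n → ZMod p} (h : ∀ i : Fin n, k ≤ (i : ℕ) → x i = 0) :
    truncate k x = x :=
  funext fun i => by
    by_cases hi : (i : ℕ) < k
    · simp [truncate, hi]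
    · simp [truncate, hi, h i (not_lt.1 hi)]

end Shift

section ShiftSum

variable {p n : ℕ} [NeZero p]

open Classical in
noncomputable def subblockReps (j : ℕ) (k : Fin n) (β : Fin n → ZMod p) :
    Finset (Fin n → ZMod p) :=
  Finset.univ.filter fun x => AgreeBelow j x β ∧ ∀ i : Fin n, (k : ℕ) ≤ i → x i = 0

theorem mem_subblockReps {j : ℕ} {k : Fin n} {β x : Fin n → ZMod p} :
    x ∈ subblockReps j k β ↔ AgreeBelow j x β ∧ ∀ i : Fin n, (k : ℕ) ≤ i → x i = 0 := by
  simp [subblockReps]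

/-- The sum of the translations of coordinate `k` over the level-`k` blocks inside `block j β`.
For `j ≤ k` these sums are homomorphisms on `T_j`, and together they form the abelianization
`T_j → (ℤ/p)^{(n - j) p^j}`. -/
noncomputable def shiftSum (g : Equiv.Perm (Fin n → ZMod p)) (j : ℕ) (k : Fin n)
    (β : Fin n → ZMod p) : ZMod p :=
  ∑ x ∈ subblockReps j k β, shift g k x

variable {j : ℕ} {k : Fin n}

theorem shiftSum_mul (hjk : j ≤ k) {g h : Equiv.Perm (Fin n → ZMod p)} (hg : g ∈ TFilt p n j)
    (hh : h ∈ TFilt p n j) (β : Fin n → ZMod p) :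
    shiftSum (g * h) j k β = shiftSum g j k β + shiftSum h j k β := by
  have hhT := TFilt_le_triangular j hh
  have hhS := TFilt_le_prefixStab j hh
  have hmaps {h' : Equiv.Perm (Fin n → ZMod p)} (hS : h' ∈ prefixStab j) {x : Fin n → ZMod p}
      (hx : x ∈ subblockReps j k β) : truncate k (h' x) ∈ subblockReps j k β := by
    rw [mem_subblockReps] at hx ⊢
    refine ⟨fun i hi => ?_, fun i hi => if_neg (not_lt.2 hi)⟩
    rw [agreeBelow_truncate k _ i (hi.trans_le hjk)]
    exact mem_prefixStab.1 hS x i hi |>.trans (hx.1 i hi)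
  have hinv {h' : Equiv.Perm (Fin n → ZMod p)} (hT : h' ∈ triangular) {x : Fin n → ZMod p}
      (hx : x ∈ subblockReps j k β) : truncate k (h'⁻¹ (truncate k (h' x))) = x := by
    rw [truncate_eq_of_agreeBelow ((agreeBelow_apply_iff (inv_mem hT) k _ _).2
      (agreeBelow_truncate k (h' x))), Equiv.Perm.inv_apply_self]
    exact truncate_eq_self (mem_subblockReps.1 hx).2
  simp only [shiftSum, shift_mul, Finset.sum_add_distrib]
  congr 1
  -- `x ↦ truncate k (h x)` permutes the representatives, and `shift g k` is constant on blocks.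
  refine Finset.sum_nbij' (fun x => truncate k (h x)) (fun x => truncate k (h⁻¹ x))
    (fun _ => hmaps hhS) (fun _ => hmaps (inv_mem hhS)) (fun _ => hinv hhT) ?_ fun x _ => ?_
  · intro x hx
    simpa using hinv (inv_mem hhT) hx
  · exact shift_eq_of_agreeBelow (TFilt_le_triangular j hg) (agreeBelow_truncate k (h x)).symm

theorem shiftSum_one (β : Fin n → ZMod p) : shiftSum 1 j k β = 0 :=
  Finset.sum_eq_zero fun _ _ => sub_self _

theorem shiftSum_inv (hjk : j ≤ k) {g : Equiv.Perm (Fin n → ZMod p)} (hg : g ∈ TFilt p n j)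
    (β : Fin n → ZMod p) : shiftSum g⁻¹ j k β = -shiftSum g j k β := by
  have h := shiftSum_mul hjk (inv_mem hg) hg β
  rw [inv_mul_cancel, shiftSum_one] at h
  linear_combination -h

theorem shiftSum_conj (hjk : j ≤ k) {g w : Equiv.Perm (Fin n → ZMod p)} (hg : g ∈ TFilt p n j)
    (hw : w ∈ TFilt p n j) (β : Fin n → ZMod p) :
    shiftSum (w * g * w⁻¹) j k β = shiftSum g j k β := by
  rw [shiftSum_mul hjk (mul_mem hw hg) (inv_mem hw), shiftSum_mul hjk hw hg,
    shiftSum_inv hjk hw]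
  ring

open scoped commutatorElement in
theorem shiftSum_commutator (hjk : j ≤ k) {g₁ g₂ : Equiv.Perm (Fin n → ZMod p)}
    (hg₁ : g₁ ∈ TFilt p n j) (hg₂ : g₂ ∈ TFilt p n j) (β : Fin n → ZMod p) :
    shiftSum ⁅g₁, g₂⁆ j k β = 0 := by
  rw [commutatorElement_def,
    shiftSum_mul hjk (conj_mem_TFilt (TFilt_le_PSyl j hg₁) hg₂) (inv_mem hg₂),
    shiftSum_conj hjk hg₂ hg₁, shiftSum_inv hjk hg₂, add_neg_cancel]

theorem shiftSum_congr {β β' : Fin n → ZMod p} (h : AgreeBelow j β β')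
    (g : Equiv.Perm (Fin n → ZMod p)) : shiftSum g j k β = shiftSum g j k β' := by
  unfold shiftSum
  congr 1
  ext x
  simp only [mem_subblockReps]
  exact and_congr_left fun _ => ⟨fun hx => hx.trans h, fun hx => hx.trans h.symm⟩

theorem shiftSum_eq_of_supportedOn {j' : ℕ} (hj : j ≤ j') {g : Equiv.Perm (Fin n → ZMod p)}
    {β : Fin n → ZMod p} (hg : SupportedOn g (block j' β)) :
    shiftSum g j k β = shiftSum g j' k β := by
  refine (Finset.sum_subset (fun x hx => ?_) fun x hx hx' => ?_).symm
  · rw [mem_subblockReps] at hx ⊢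
    exact ⟨hx.1.mono hj, hx.2⟩
  · rw [mem_subblockReps] at hx hx'
    rw [shift, hg x fun hxβ => hx' ⟨hxβ, hx.2⟩, sub_self]

theorem shiftSum_self {m : ℕ} (hm : m < n) (g : Equiv.Perm (Fin n → ZMod p))
    (β : Fin n → ZMod p) : shiftSum g m ⟨m, hm⟩ β = shift g ⟨m, hm⟩ (truncate m β) := by
  have : subblockReps m ⟨m, hm⟩ β = {truncate m β} := by
    ext x
    rw [mem_subblockReps, Finset.mem_singleton]
    refine ⟨fun hx => ?_, fun hx => hx ▸ ⟨agreeBelow_truncate m β, fun i hi => if_neg (by simpa)⟩⟩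
    rw [← truncate_eq_self hx.2]
    exact truncate_eq_of_agreeBelow hx.1
  rw [shiftSum, this, Finset.sum_singleton]

theorem shiftSum_restrictBlock_of_mem {g : Equiv.Perm (Fin n → ZMod p)} (hg : g ∈ prefixStab j)
    {β β' : Fin n → ZMod p} (hβ' : β' ∈ block j β) :
    shiftSum (restrictBlock j β hg) j k β' = shiftSum g j k β' :=
  Finset.sum_congr rfl fun _ hx => by
    rw [shift, shift, restrictBlock_apply_of_mem hg ((mem_subblockReps.1 hx).1.trans hβ')]

theorem shiftSum_restrictBlock_of_notMem {g : Equiv.Perm (Fin n → ZMod p)}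
    (hg : g ∈ prefixStab j) {β β' : Fin n → ZMod p} (hβ' : β' ∉ block j β) :
    shiftSum (restrictBlock j β hg) j k β' = 0 :=
  Finset.sum_eq_zero fun _ hx => by
    rw [shift, restrictBlock_apply_of_notMem hg
      fun hxβ => hβ' ((mem_subblockReps.1 hx).1.symm.trans hxβ), sub_self]

end ShiftSum

section NormalSubgroup

variable {p n : ℕ} {N : Subgroup (Equiv.Perm (Fin n → ZMod p))}

theorem exists_supportedOn_shift_eq_one [NeZero p] {m : ℕ} (hm : m < n) (γ : Fin n → ZMod p) :
    ∃ z ∈ TFilt p n m, SupportedOn z (block m γ) ∧ ∀ x ∈ block m γ, shift z ⟨m, hm⟩ x = 1 := by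
  obtain ⟨h, hh, rfl⟩ := exists_mem_PSyl_apply_zero_eq γ
  refine ⟨h * sigmaPerm p n ⟨m, hm⟩ * h⁻¹, conj_sigmaPerm_mem_TFilt hh le_rfl,
    conj_sigmaPerm_supportedOn hh le_rfl, fun x hx => ?_⟩
  have hx₀ : AgreeBelow m (h⁻¹ x) 0 := by
    rw [← agreeBelow_apply_iff (PSyl_le_triangular hh), Equiv.Perm.apply_inv_self]
    exact hx
  rw [shift_conj (sigmaPerm_mem_triangular _) (sigmaPerm_mem_prefixStab le_rfl)
    (PSyl_le_triangular hh) hx₀, shift, sigmaPerm_apply_self (x := 0) fun _ _ => rfl,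
    add_sub_cancel_left]

theorem exists_mem_shift_eq_one_of_shift_ne_zero [Fact p.Prime]
    (hN : ∀ g ∈ PSyl p n, ∀ x ∈ N, g * x * g⁻¹ ∈ N) {j : ℕ} (hj : j < n)
    {x : Equiv.Perm (Fin n → ZMod p)} (hxN : x ∈ N) (hxT : x ∈ TFilt p n j)
    {x₀ : Fin n → ZMod p} (hx₀ : shift x ⟨j, hj⟩ x₀ ≠ 0) (β : Fin n → ZMod p) :
    ∃ z ∈ N, z ∈ TFilt p n j ∧ ∀ y ∈ block j β, shift z ⟨j, hj⟩ y = 1 := by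
  obtain ⟨h₁, hh₁, rfl⟩ := exists_mem_PSyl_apply_zero_eq x₀
  obtain ⟨h₂, hh₂, rfl⟩ := exists_mem_PSyl_apply_zero_eq β
  have hw : h₂ * h₁⁻¹ ∈ PSyl p n := mul_mem hh₂ (inv_mem hh₁)
  have hwxT := conj_mem_TFilt hw hxT
  have hshift : ∀ y ∈ block j (h₂ 0),
      shift (h₂ * h₁⁻¹ * x * (h₂ * h₁⁻¹)⁻¹) ⟨j, hj⟩ y = shift x ⟨j, hj⟩ (h₁ 0) := by
    intro y hy
    refine shift_conj (TFilt_le_triangular j hxT) (TFilt_le_prefixStab j hxT)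
      (PSyl_le_triangular hw) ?_
    rw [mul_inv_rev, inv_inv, Equiv.Perm.mul_apply,
      agreeBelow_apply_iff (PSyl_le_triangular hh₁),
      ← agreeBelow_apply_iff (PSyl_le_triangular hh₂), Equiv.Perm.apply_inv_self]
    exact hy
  refine ⟨_ ^ (shift x ⟨j, hj⟩ (h₁ 0))⁻¹.val, pow_mem (hN _ hw x hxN) _, pow_mem hwxT _,
    fun y hy => ?_⟩
  rw [shift_pow (TFilt_le_prefixStab j hwxT) hshift _ hy, ZMod.natCast_zmod_val,
    inv_mul_cancel₀ hx₀]

theorem disjoint_block_succ_update [Fact p.Prime] {m : ℕ} (hm : m < n) (γ : Fin n → ZMod p)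
    (a : ZMod p) :
    Disjoint (block (m + 1) (Function.update γ ⟨m, hm⟩ (a + 1)))
      (block (m + 1) (Function.update γ ⟨m, hm⟩ a)) :=
  Set.disjoint_left.2 fun x hx hx' => by
    rw [mem_block_succ_update_iff] at hx hx'
    exact one_ne_zero (by linear_combination hx'.2 - hx.2 : (1 : ZMod p) = 0)

/-- Conjugating `s` by `z` moves it to a sibling block, where it commutes with `t`;
hence `s` and `t` commute modulo `N`. -/
theorem commutator_mem_of_supportedOn [Fact p.Prime]
    (hN : ∀ g ∈ PSyl p n, ∀ x ∈ N, g * x * g⁻¹ ∈ N) {j : ℕ} (hj : j < n)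
    {z : Equiv.Perm (Fin n → ZMod p)} (hzN : z ∈ N) (hzT : z ∈ TFilt p n j)
    {γ : Fin n → ZMod p} (hz : ∀ y ∈ block j γ, shift z ⟨j, hj⟩ y = 1)
    {s t : Equiv.Perm (Fin n → ZMod p)} (hs : s ∈ PSyl p n) (ht : t ∈ PSyl p n)
    (hsγ : SupportedOn s (block (j + 1) γ)) (htγ : SupportedOn t (block (j + 1) γ)) :
    s * t * s⁻¹ * t⁻¹ ∈ N := by
  have himg := image_block_update_subset hj (TFilt_le_prefixStab j hzT) hz (γ ⟨j, hj⟩)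
  rw [Function.update_eq_self] at himg
  have hcomm : Commute (z * s * z⁻¹) t :=
    ((hsγ.conj z).mono himg).commute htγ (by
      simpa only [Function.update_eq_self] using disjoint_block_succ_update hj γ (γ ⟨j, hj⟩))
  have hs' : s * z * s⁻¹ * z⁻¹ ∈ N := mul_mem (hN s hs z hzN) (inv_mem hzN)
  have key : s * t * s⁻¹ * t⁻¹ =
      (s * z * s⁻¹ * z⁻¹) * (t * (s * z * s⁻¹ * z⁻¹)⁻¹ * t⁻¹) :=
    calc s * t * s⁻¹ * t⁻¹ = s * z * s⁻¹ * z⁻¹ * (z * s * z⁻¹ * t) * s⁻¹ * t⁻¹ := by group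
      _ = s * z * s⁻¹ * z⁻¹ * (t * (z * s * z⁻¹)) * s⁻¹ * t⁻¹ := by rw [hcomm.eq]
      _ = _ := by group
  rw [key]
  exact mul_mem hs' (hN t ht _ (inv_mem hs'))

def BalancedOn [NeZero p] (m : ℕ) (γ : Fin n → ZMod p) (g : Equiv.Perm (Fin n → ZMod p)) :
    Prop :=
  g ∈ TFilt p n m ∧ SupportedOn g (block m γ) ∧ ∀ k : Fin n, m ≤ (k : ℕ) → shiftSum g m k γ = 0

def lowChildren {m : ℕ} (hm : m < n) (γ : Fin n → ZMod p) (c : ℕ) : Set (Fin n → ZMod p) :=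
  {x | x ∈ block m γ ∧ (x ⟨m, hm⟩).val < c}

theorem BalancedOn.mem_TFilt_succ [NeZero p] {m : ℕ} (hm : m < n) {γ : Fin n → ZMod p}
    {g : Equiv.Perm (Fin n → ZMod p)} (hg : BalancedOn m γ g) : g ∈ TFilt p n (m + 1) := by
  obtain ⟨hgT, hgγ, hgsum⟩ := hg
  refine mem_TFilt_of_mem_prefixStab (TFilt_le_PSyl m hgT)
    (mem_prefixStab_succ hm (TFilt_le_prefixStab m hgT) fun x => ?_)
  by_cases hx : x ∈ block m γ
  · rw [shift_eq_of_agreeBelow (TFilt_le_triangular m hgT)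
      (hx.trans (agreeBelow_truncate m γ).symm), ← shiftSum_self]
    exact hgsum _ le_rfl
  · rw [shift, hgγ x hx, sub_self]

theorem lowChildren_succ_diff_subset [NeZero p] {m : ℕ} (hm : m < n) (γ : Fin n → ZMod p)
    (c : ℕ) :
    lowChildren hm γ (c + 1) \ block (m + 1) (Function.update γ ⟨m, hm⟩ (c : ZMod p)) ⊆
      lowChildren hm γ c := by
  rintro x ⟨⟨hxγ, hxc⟩, hx⟩
  refine ⟨hxγ, lt_of_le_of_ne (Nat.lt_succ_iff.1 hxc) fun h => hx ?_⟩
  rw [mem_block_succ_update_iff, ← h, ZMod.natCast_zmod_val]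
  exact ⟨hxγ, rfl⟩

theorem block_succ_update_subset_lowChildren {m : ℕ} (hm : m < n) (γ : Fin n → ZMod p)
    {c : ℕ} (hc : c < p) :
    block (m + 1) (Function.update γ ⟨m, hm⟩ (c : ZMod p)) ⊆ lowChildren hm γ (c + 1) := by
  intro x hx
  rw [mem_block_succ_update_iff] at hx
  exact ⟨hx.1, by rw [hx.2, ZMod.val_cast_of_lt hc]; omega⟩

/-- The restriction `r` of `g` to the child block where coordinate `m` equals `c + 1` is
replaced by `z⁻¹ r z`, which lives on the child where it equals `c`; the error is in `N`
because `r` commutes with `z` modulo `N`. -/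
theorem exists_mul_inv_mem_of_supportedOn_lowChildren [NeZero p]
    (hN : ∀ g ∈ PSyl p n, ∀ x ∈ N, g * x * g⁻¹ ∈ N) {m : ℕ} (hm : m < n)
    {γ : Fin n → ZMod p} {z : Equiv.Perm (Fin n → ZMod p)} (hzT : z ∈ TFilt p n m)
    (hz : ∀ x ∈ block m γ, shift z ⟨m, hm⟩ x = 1)
    (hcomm : ∀ s ∈ PSyl p n, SupportedOn s (block m γ) → s * z * s⁻¹ * z⁻¹ ∈ N)
    {c : ℕ} (hc : c + 1 < p) {g : Equiv.Perm (Fin n → ZMod p)} (hgT : g ∈ TFilt p n (m + 1))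
    (hg : SupportedOn g (lowChildren hm γ (c + 2))) :
    ∃ g' ∈ TFilt p n (m + 1), SupportedOn g' (lowChildren hm γ (c + 1)) ∧
      (∀ k : Fin n, m + 1 ≤ (k : ℕ) → shiftSum g' m k γ = shiftSum g m k γ) ∧
      g * g'⁻¹ ∈ N := by
  have hgS := TFilt_le_prefixStab (m + 1) hgT
  set r := restrictBlock (m + 1) (Function.update γ ⟨m, hm⟩ ((c + 1 : ℕ) : ZMod p)) hgS
  have hrT : r ∈ TFilt p n (m + 1) := restrictBlock_mem_TFilt hgT
  have hzP := TFilt_le_PSyl m hzT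
  have hzS := TFilt_le_prefixStab m hzT
  have hz' : ∀ x ∈ block m γ, shift z⁻¹ ⟨m, hm⟩ x = -1 := fun x hx => by
    rw [shift_inv, hz _ ((apply_mem_block_iff (inv_mem hzS) γ x).2 hx)]
  have himg := image_block_update_subset hm (inv_mem hzS) hz' ((c + 1 : ℕ) : ZMod p)
  rw [show ((c + 1 : ℕ) : ZMod p) + -1 = (c : ℕ) by push_cast; ring] at himg
  have hr' : SupportedOn (z⁻¹ * r * z) (block (m + 1) (Function.update γ ⟨m, hm⟩ (c : ℕ))) := by
    simpa only [inv_inv] using ((restrictBlock_supportedOn hgS).conj z⁻¹).mono himg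
  have hrγ : SupportedOn r (block m γ) :=
    (restrictBlock_supportedOn hgS).mono fun x hx => ((mem_block_succ_update_iff hm).1 hx).1
  refine ⟨g * r⁻¹ * (z⁻¹ * r * z), mul_mem (mul_mem hgT (inv_mem hrT)) ?_, ?_, fun k hk => ?_, ?_⟩
  · simpa only [inv_inv] using conj_mem_TFilt (inv_mem (TFilt_le_PSyl m hzT)) hrT
  · exact ((supportedOn_mul_inv_restrictBlock hgS hg).mono
      (lowChildren_succ_diff_subset hm γ (c + 1))).mul
      (hr'.mono (block_succ_update_subset_lowChildren hm γ (by omega)))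
  · have hmk : m ≤ (k : ℕ) := by omega
    have h₁ := TFilt_antitone m.le_succ hgT
    have h₂ := TFilt_antitone m.le_succ hrT
    have h₃ : z⁻¹ * r * z⁻¹⁻¹ ∈ TFilt p n m := conj_mem_TFilt (inv_mem hzP) h₂
    rw [show z⁻¹ * r * z = z⁻¹ * r * z⁻¹⁻¹ by rw [inv_inv],
      shiftSum_mul hmk (mul_mem h₁ (inv_mem h₂)) h₃, shiftSum_mul hmk h₁ (inv_mem h₂),
      shiftSum_inv hmk h₂, shiftSum_conj hmk h₂ (inv_mem hzT)]
    ring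
  · have hq : g * r⁻¹ * z⁻¹ ∈ PSyl p n :=
      mul_mem (mul_mem (TFilt_le_PSyl _ hgT) (inv_mem (TFilt_le_PSyl _ hrT))) (inv_mem hzP)
    convert hN _ hq _ (inv_mem (hcomm r (TFilt_le_PSyl _ hrT) hrγ)) using 1
    group

theorem mem_of_balancedOn_of_commutator_mem [NeZero p]
    (hN : ∀ g ∈ PSyl p n, ∀ x ∈ N, g * x * g⁻¹ ∈ N) {m : ℕ} (hm : m < n)
    {γ : Fin n → ZMod p} {z : Equiv.Perm (Fin n → ZMod p)} (hzT : z ∈ TFilt p n m)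
    (hz : ∀ x ∈ block m γ, shift z ⟨m, hm⟩ x = 1)
    (hcomm : ∀ s ∈ PSyl p n, SupportedOn s (block m γ) → s * z * s⁻¹ * z⁻¹ ∈ N)
    (hchild : ∀ u, BalancedOn (m + 1) (Function.update γ ⟨m, hm⟩ 0) u → u ∈ N)
    {g : Equiv.Perm (Fin n → ZMod p)} (hg : BalancedOn m γ g) : g ∈ N := by
  have hgT' := hg.mem_TFilt_succ hm
  obtain ⟨-, hgγ, hgsum⟩ := hg
  suffices key : ∀ c, 1 ≤ c → c ≤ p → ∀ g ∈ TFilt p n (m + 1),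
      SupportedOn g (lowChildren hm γ c) →
      (∀ k : Fin n, m + 1 ≤ (k : ℕ) → shiftSum g m k γ = 0) → g ∈ N from
    key p NeZero.one_le le_rfl g hgT' (hgγ.mono fun x hx => ⟨hx, ZMod.val_lt _⟩)
      fun k hk => hgsum k (by omega)
  intro c hc
  induction c, hc using Nat.le_induction with
  | base =>
    intro _ g hgT hg hsum
    have hg' : SupportedOn g (block (m + 1) (Function.update γ ⟨m, hm⟩ 0)) :=
      hg.mono fun x ⟨hxγ, hx⟩ => (mem_block_succ_update_iff hm).2
        ⟨hxγ, (ZMod.val_eq_zero _).1 (by omega)⟩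
    refine hchild g ⟨hgT, hg', fun k hk => ?_⟩
    rw [← shiftSum_eq_of_supportedOn m.le_succ hg', shiftSum_congr (agreeBelow_update hm γ 0)]
    exact hsum k hk
  | succ c hc ih =>
    intro hcp g hgT hg hsum
    obtain ⟨c, rfl⟩ : ∃ c', c = c' + 1 := ⟨c - 1, by omega⟩
    obtain ⟨g', hg'T, hg', hsum', hgg'⟩ :=
      exists_mul_inv_mem_of_supportedOn_lowChildren hN hm hzT hz hcomm (by omega) hgT hg
    have hg'N := ih (by omega) g' hg'T hg' fun k hk => (hsum' k hk).trans (hsum k hk)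
    simpa using mul_mem hgg' hg'N

theorem mem_of_balancedOn_of_lt [Fact p.Prime]
    (hN : ∀ g ∈ PSyl p n, ∀ x ∈ N, g * x * g⁻¹ ∈ N) {j : ℕ} (hj : j < n)
    {z : Equiv.Perm (Fin n → ZMod p)} (hzN : z ∈ N) (hzT : z ∈ TFilt p n j)
    {β : Fin n → ZMod p} (hz : ∀ y ∈ block j β, shift z ⟨j, hj⟩ y = 1) {m : ℕ} (hjm : j < m)
    {γ : Fin n → ZMod p} (hγ : γ ∈ block j β) {g : Equiv.Perm (Fin n → ZMod p)}
    (hg : BalancedOn m γ g) : g ∈ N := by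
  obtain ⟨d, hd⟩ : ∃ d, n - m = d := ⟨_, rfl⟩
  induction d generalizing m γ g with
  | zero =>
    rw [hg.2.1.eq_one ((block_length_subsingleton γ).anti (block_mono (by omega) γ))]
    exact one_mem N
  | succ d ih =>
    have hm : m < n := by omega
    obtain ⟨z', hz'T, hz'γ, hz'⟩ := exists_supportedOn_shift_eq_one hm γ
    have hsub : block m γ ⊆ block (j + 1) γ := block_mono hjm γ
    refine mem_of_balancedOn_of_commutator_mem hN hm hz'T hz' (fun s hs hsγ => ?_)
      (fun u hu => ih (by omega) ((agreeBelow_update hm γ 0).mono hjm.le |>.trans hγ) hu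
        (by omega)) hg
    rw [← block_eq_of_agreeBelow hγ] at hz
    exact commutator_mem_of_supportedOn hN hj hzN hzT hz hs (TFilt_le_PSyl m hz'T)
      (hsγ.mono hsub) (hz'γ.mono hsub)

theorem mem_of_balancedOn [Fact p.Prime] (hN : ∀ g ∈ PSyl p n, ∀ x ∈ N, g * x * g⁻¹ ∈ N)
    {j : ℕ} (hj : j < n) {x : Equiv.Perm (Fin n → ZMod p)} (hxN : x ∈ N)
    (hxT : x ∈ TFilt p n j) {x₀ : Fin n → ZMod p} (hx₀ : shift x ⟨j, hj⟩ x₀ ≠ 0)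
    {β : Fin n → ZMod p} {g : Equiv.Perm (Fin n → ZMod p)} (hg : BalancedOn j β g) : g ∈ N := by
  obtain ⟨z, hzN, hzT, hz⟩ := exists_mem_shift_eq_one_of_shift_ne_zero hN hj hxN hxT hx₀ β
  exact mem_of_balancedOn_of_commutator_mem hN hj hzT hz
    (fun s hs _ => mul_mem (hN s hs z hzN) (inv_mem hzN))
    (fun u hu => mem_of_balancedOn_of_lt hN hj hzN hzT hz j.lt_succ_self
      (agreeBelow_update hj β 0) hu) hg

theorem mem_of_shiftSum_eq_zero [Fact p.Prime]
    (hN : ∀ g ∈ PSyl p n, ∀ x ∈ N, g * x * g⁻¹ ∈ N) {j : ℕ} (hj : j < n)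
    {x : Equiv.Perm (Fin n → ZMod p)} (hxN : x ∈ N) (hxT : x ∈ TFilt p n j)
    {x₀ : Fin n → ZMod p} (hx₀ : shift x ⟨j, hj⟩ x₀ ≠ 0) {g : Equiv.Perm (Fin n → ZMod p)}
    (hgT : g ∈ TFilt p n j) (hg : ∀ (k : Fin n) β, j ≤ (k : ℕ) → shiftSum g j k β = 0) :
    g ∈ N := by
  suffices key : ∀ (S : Finset (Fin n → ZMod p)) g, g ∈ TFilt p n j → SupportedOn g S →
      (∀ (k : Fin n) β, j ≤ (k : ℕ) → shiftSum g j k β = 0) → g ∈ N from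
    key Finset.univ g hgT (fun x hx => absurd (Finset.mem_coe.2 (Finset.mem_univ x)) hx) hg
  classical
  intro S
  induction S using Finset.strongInduction with
  | H S ih =>
    intro g hgT hgS hg
    by_cases h1 : g = 1
    · exact h1 ▸ one_mem N
    obtain ⟨x₁, hx₁⟩ : ∃ x₁, g x₁ ≠ x₁ := by
      by_contra! h
      exact h1 (Equiv.ext h)
    have hgS' := TFilt_le_prefixStab j hgT
    set r := restrictBlock j x₁ hgS'
    have hrT : r ∈ TFilt p n j := restrictBlock_mem_TFilt hgT
    have hr : ∀ (k : Fin n) β, j ≤ (k : ℕ) → shiftSum r j k β = 0 := fun k β hk => by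
      by_cases hβ : β ∈ block j x₁
      · rw [shiftSum_restrictBlock_of_mem hgS' hβ]
        exact hg k β hk
      · exact shiftSum_restrictBlock_of_notMem hgS' hβ
    have hrN : r ∈ N := mem_of_balancedOn hN hj hxN hxT hx₀
      ⟨hrT, restrictBlock_supportedOn hgS', fun k hk => hr k x₁ hk⟩
    have hrest : g * r⁻¹ ∈ N := by
      refine ih (S.filter (· ∉ block j x₁)) ?_ _ (mul_mem hgT (inv_mem hrT)) ?_ fun k β hk => ?_
      · refine Finset.filter_ssubset.2 ⟨x₁, ?_, fun h => h (AgreeBelow.refl x₁)⟩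
        by_contra hx
        exact hx₁ (hgS x₁ hx)
      · refine (supportedOn_mul_inv_restrictBlock hgS' hgS).mono fun x hx => ?_
        simpa using hx
      · rw [shiftSum_mul hk hgT (inv_mem hrT), shiftSum_inv hk hrT, hg k β hk, hr k β hk,
          neg_zero, add_zero]
    simpa using mul_mem hrest hrN

end NormalSubgroup

theorem exists_shift_ne_zero {p n j : ℕ} (hj : j < n) {x : Equiv.Perm (Fin n → ZMod p)}
    (hxT : x ∈ TFilt p n j) (hx : x ∉ TFilt p n (j + 1)) : ∃ x₀, shift x ⟨j, hj⟩ x₀ ≠ 0 := by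
  by_contra! h
  exact hx (mem_TFilt_of_mem_prefixStab (TFilt_le_PSyl j hxT)
    (mem_prefixStab_succ hj (TFilt_le_prefixStab j hxT) h))

end Weir

open Weir

theorem commutator_TFilt_le_of_depth (hp : p.Prime)
    (N : Subgroup (Equiv.Perm (Fin n → ZMod p)))
    (hNnormal : ∀ g ∈ PSyl p n, ∀ x ∈ N, g * x * g⁻¹ ∈ N)
    (j : ℕ) (hdepth : N ≤ TFilt p n j)
    (hdepth' : ∀ k ≤ n, N ≤ TFilt p n k → k ≤ j) :
    ⁅TFilt p n j, TFilt p n j⁆ ≤ N := by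
  have := Fact.mk hp
  rcases lt_or_ge j n with hj | hj
  · obtain ⟨x, hxN, hx⟩ : ∃ x ∈ N, x ∉ TFilt p n (j + 1) :=
      Set.not_subset.1 fun h => (hdepth' (j + 1) hj h).not_gt j.lt_succ_self
    obtain ⟨x₀, hx₀⟩ := exists_shift_ne_zero hj (hdepth hxN) hx
    refine Subgroup.commutator_le.2 fun g₁ hg₁ g₂ hg₂ => ?_
    refine mem_of_shiftSum_eq_zero hNnormal hj hxN (hdepth hxN) hx₀ ?_
      fun k β hk => shiftSum_commutator hk hg₁ hg₂ β
    rw [commutatorElement_def]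
    exact mul_mem (mul_mem (mul_mem hg₁ hg₂) (inv_mem hg₁)) (inv_mem hg₂)
  · rw [TFilt_eq_bot hj, Subgroup.commutator_bot_left]
    exact bot_le
end

section
/- Let p be a prime and n ≥ 1. The subgroup ⟨σ_0,…,σ_{n−1}⟩ of Sym(F_p^n) has order p^{1+p+p^2+⋯+p^{n−1}}, hence is a Sylow p-subgroup of Sym(F_p^n), and it acts transitively on F_p^n. -/
/-!
Every `σ_i` is triangular: it changes the coordinate `λ_k` by an amount depending only on
`λ_0, …, λ_{k-1}`. Let `T_k` be the group of triangular permutations fixing the first `k`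
coordinates. Recording, for `g ∈ T_k`, how `g` moves the `k`-th coordinate as a function
`F_p^k → F_p` is a homomorphism `T_k → F_p^(F_p^k)` with kernel `T_{k+1}`. Powers of the `σ_k`
clear coordinates one at a time, so `P = ⟨σ_0, …, σ_{n-1}⟩` is transitive; conjugating `σ_k` by
an element of `P` sending `0` to `(a, 0, …, 0)` realizes the indicator function of `a`, so
`P ∩ T_k` maps onto `F_p^(F_p^k)` and `|P ∩ T_k| = p^(p^k) |P ∩ T_{k+1}|`. Hence
`|P| = p^(1 + p + ⋯ + p^(n-1))`, which by Legendre's formula is the `p`-part of `(p^n)!`.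
-/

variable (p n : ℕ)

open Equiv Finset

variable {p n}

def IsTriangular (g : Perm (Fin n → ZMod p)) : Prop :=
  ∀ (k : Fin n) (lam mu : Fin n → ZMod p), (∀ j < k, lam j = mu j) →
    g lam k - lam k = g mu k - mu k

namespace IsTriangular

variable {g h : Perm (Fin n → ZMod p)} {lam mu : Fin n → ZMod p} {k : Fin n}

theorem apply_eq (hg : IsTriangular g) (hlt : ∀ j < k, lam j = mu j) (hk : lam k = mu k) :
    g lam k = g mu k := by
  linear_combination hg k lam mu hlt + hk

theorem apply_eq_of_lt (hg : IsTriangular g) (hlt : ∀ j < k, lam j = mu j) :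
    ∀ j < k, g lam j = g mu j :=
  fun j hj => hg.apply_eq (fun i hi => hlt i (hi.trans hj)) (hlt j hj)

protected theorem one : IsTriangular (1 : Perm (Fin n → ZMod p)) := by
  intro k lam mu _
  simp

protected theorem mul (hg : IsTriangular g) (hh : IsTriangular h) : IsTriangular (g * h) := by
  intro k lam mu hlt
  simp only [Perm.mul_apply]
  linear_combination hg k (h lam) (h mu) (hh.apply_eq_of_lt hlt) + hh k lam mu hlt

protected theorem inv (hg : IsTriangular g) : IsTriangular g⁻¹ := by
  have inv_apply_eq_of_lt : ∀ {lam mu : Fin n → ZMod p} {k : Fin n},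
      (∀ j < k, lam j = mu j) → ∀ j < k, g⁻¹ lam j = g⁻¹ mu j := by
    intro lam mu k hlt j
    induction j using WellFoundedLT.induction with
    | _ j ih =>
      intro hj
      have := hg j (g⁻¹ lam) (g⁻¹ mu) fun i hi => ih i hi (hi.trans hj)
      simp only [Perm.coe_inv, apply_symm_apply] at this ⊢
      linear_combination hlt j hj - this
  intro k lam mu hlt
  have := hg k (g⁻¹ lam) (g⁻¹ mu) (inv_apply_eq_of_lt hlt)
  simp only [Perm.coe_inv, apply_symm_apply] at this ⊢
  linear_combination -this

theorem forall_lt_apply_eq_iff (hg : IsTriangular g) :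
    (∀ j < k, g lam j = g mu j) ↔ ∀ j < k, lam j = mu j := by
  refine ⟨fun h => ?_, hg.apply_eq_of_lt⟩
  simpa using hg.inv.apply_eq_of_lt h

end IsTriangular

variable (p n) in
def triangular (k : ℕ) : Subgroup (Perm (Fin n → ZMod p)) where
  carrier := {g | IsTriangular g ∧ ∀ j : Fin n, (j : ℕ) < k → ∀ lam, g lam j = lam j}
  one_mem' := ⟨.one, fun _ _ _ => rfl⟩
  mul_mem' := by
    rintro g h ⟨hg, hg_fix⟩ ⟨hh, hh_fix⟩
    refine ⟨hg.mul hh, fun j hj lam => ?_⟩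
    rw [Perm.mul_apply, hg_fix j hj, hh_fix j hj]
  inv_mem' := by
    rintro g ⟨hg, hg_fix⟩
    refine ⟨hg.inv, fun j hj lam => ?_⟩
    simpa using (hg_fix j hj (g⁻¹ lam)).symm

theorem triangular_anti : Antitone (triangular p n) :=
  fun _ _ hkl _ ⟨hg, hg_fix⟩ => ⟨hg, fun j hj => hg_fix j (hj.trans_le hkl)⟩

theorem triangular_eq_bot : triangular p n n = ⊥ := by
  refine (Subgroup.eq_bot_iff_forall _).2 fun g ⟨_, hg_fix⟩ => ?_
  ext lam j
  exact hg_fix j j.isLt lam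

theorem conj_mem_triangular {t s : Perm (Fin n → ZMod p)} {k : ℕ} (ht : IsTriangular t)
    (hs : s ∈ triangular p n k) : t * s * t⁻¹ ∈ triangular p n k := by
  refine ⟨(ht.mul hs.1).mul ht.inv, fun j hj lam => ?_⟩
  have hfix : ∀ i ≤ j, s (t⁻¹ lam) i = t⁻¹ lam i := fun i hi => hs.2 i (by omega) _
  simp only [Perm.mul_apply]
  rw [ht.apply_eq (fun i hi => hfix i hi.le) (hfix j le_rfl)]
  simp

theorem IsTriangular.mul_apply_sub {g h : Perm (Fin n → ZMod p)} {i : Fin n}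
    (hg : IsTriangular g) (hh : h ∈ triangular p n i) (lam : Fin n → ZMod p) :
    (g * h) lam i - lam i = (g lam i - lam i) + (h lam i - lam i) := by
  rw [Perm.mul_apply]
  linear_combination hg i (h lam) lam fun j hj => hh.2 j hj lam

theorem sigmaPerm_apply (i : Fin n) (lam : Fin n → ZMod p) (k : Fin n) :
    sigmaPerm p n i lam k =
      if k = i ∧ ∀ j < i, lam j = 0 then lam k + 1 else lam k :=
  rfl

theorem sigmaPerm_apply_of_ne {i k : Fin n} (lam : Fin n → ZMod p) (hk : k ≠ i) :
    sigmaPerm p n i lam k = lam k :=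
  sigmaFun_apply_ne p n i lam hk

theorem sigmaPerm_apply_self_sub (i : Fin n) (lam : Fin n → ZMod p) :
    sigmaPerm p n i lam i - lam i = if ∀ j < i, lam j = 0 then 1 else 0 := by
  rw [sigmaPerm_apply]
  split_ifs <;> simp_all

theorem sigmaPerm_eq_add_single {i : Fin n} {lam : Fin n → ZMod p} (h : ∀ j < i, lam j = 0) :
    sigmaPerm p n i lam = lam + Pi.single i 1 := by
  ext k
  rcases eq_or_ne k i with rfl | hk
  · rw [Pi.add_apply, Pi.single_eq_same, ← sub_eq_iff_eq_add', sigmaPerm_apply_self_sub, if_pos h]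
  · rw [sigmaPerm_apply_of_ne lam hk, Pi.add_apply, Pi.single_eq_of_ne hk, add_zero]

theorem sigmaPerm_pow_eq_add_single {i : Fin n} {lam : Fin n → ZMod p} (h : ∀ j < i, lam j = 0)
    (m : ℕ) : (sigmaPerm p n i ^ m) lam = lam + Pi.single i (m : ZMod p) := by
  induction m with
  | zero => simp
  | succ m ih =>
    have h' : ∀ j < i, (lam + Pi.single i (m : ZMod p) : Fin n → ZMod p) j = 0 := fun j hj => by
      simp [h j hj, Pi.single_eq_of_ne hj.ne]
    rw [pow_succ', Perm.mul_apply, ih, sigmaPerm_eq_add_single h', add_assoc, ← Pi.single_add,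
      Nat.cast_succ]

theorem sigmaPerm_mem_triangular (i : Fin n) : sigmaPerm p n i ∈ triangular p n i := by
  refine ⟨fun k lam mu hlt => ?_, fun j hj lam => sigmaPerm_apply_of_ne lam (Fin.ne_of_lt hj)⟩
  rcases eq_or_ne k i with rfl | hk
  · simp only [sigmaPerm_apply_self_sub]
    congr 1
    exact propext (forall₂_congr fun j hj => by rw [hlt j hj])
  · rw [sigmaPerm_apply_of_ne lam hk, sigmaPerm_apply_of_ne mu hk, sub_self, sub_self]

theorem sigmaPerm_mem_PSyl (i : Fin n) : sigmaPerm p n i ∈ PSyl p n :=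
  Subgroup.subset_closure (Set.mem_range_self i)

theorem PSyl_le_triangular : PSyl p n ≤ triangular p n 0 :=
  (Subgroup.closure_le _).2 <| Set.range_subset_iff.2 fun i =>
    triangular_anti (Nat.zero_le _) (sigmaPerm_mem_triangular i)

theorem isTriangular_of_mem_PSyl {g : Perm (Fin n → ZMod p)} (hg : g ∈ PSyl p n) :
    IsTriangular g :=
  (PSyl_le_triangular hg).1

theorem exists_mem_PSyl_apply_eq_zero [NeZero p] (v : Fin n → ZMod p) :
    ∃ g ∈ PSyl p n, g v = 0 := by
  suffices ∀ m : ℕ, ∃ g ∈ PSyl p n, ∀ k : Fin n, (k : ℕ) < m → g v k = 0 by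
    obtain ⟨g, hg, hzero⟩ := this n
    exact ⟨g, hg, funext fun k => hzero k k.isLt⟩
  intro m
  induction m with
  | zero => exact ⟨1, one_mem _, fun k hk => absurd hk (Nat.not_lt_zero _)⟩
  | succ m ih =>
    obtain ⟨g, hg, hzero⟩ := ih
    by_cases hm : m < n
    · let i : Fin n := ⟨m, hm⟩
      refine ⟨sigmaPerm p n i ^ (-g v i).val * g,
        mul_mem (pow_mem (sigmaPerm_mem_PSyl i) _) hg, fun k hk => ?_⟩
      rw [Perm.mul_apply, sigmaPerm_pow_eq_add_single fun j hj => hzero j hj, Pi.add_apply]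
      rcases Nat.lt_succ_iff_lt_or_eq.mp hk with hk | hk
      · rw [hzero k hk, Pi.single_eq_of_ne (Fin.ne_of_lt hk), add_zero]
      · obtain rfl : k = i := Fin.ext hk
        rw [Pi.single_eq_same, ZMod.natCast_zmod_val, add_neg_cancel]
    · exact ⟨g, hg, fun k _ => hzero k (by omega)⟩

theorem exists_mem_PSyl_apply_eq [NeZero p] (v w : Fin n → ZMod p) :
    ∃ g ∈ PSyl p n, g v = w := by
  obtain ⟨gv, hgv, hv⟩ := exists_mem_PSyl_apply_eq_zero v
  obtain ⟨gw, hgw, hw⟩ := exists_mem_PSyl_apply_eq_zero w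
  refine ⟨gw⁻¹ * gv, mul_mem (inv_mem hgw) hgv, ?_⟩
  rw [Perm.mul_apply, hv, ← hw]
  exact gw.symm_apply_apply w

variable (n) in
def extendByZero {k : ℕ} (x : Fin k → ZMod p) : Fin n → ZMod p :=
  fun j => if h : (j : ℕ) < k then x ⟨j, h⟩ else 0

theorem extendByZero_apply_self {i : Fin n} (x : Fin i → ZMod p) : extendByZero n x i = 0 :=
  dif_neg (lt_irrefl _)

theorem forall_lt_eq_extendByZero {i : Fin n} (lam : Fin n → ZMod p) :
    ∀ j < i, lam j = extendByZero n (fun j : Fin i => lam (Fin.castLT j (j.2.trans i.2))) j :=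
  fun _ hj => by simp [extendByZero, hj]

theorem forall_lt_extendByZero_eq_iff {i : Fin n} {x y : Fin i → ZMod p} :
    (∀ j < i, extendByZero n x j = extendByZero n y j) ↔ x = y := by
  refine ⟨fun h => funext fun j => ?_, fun h _ _ => h ▸ rfl⟩
  simpa [extendByZero] using h (Fin.castLT j (j.2.trans i.2)) j.2

variable (p) in
/-- Since `extendByZero n x i = 0`, the value at `x` is the increment `g lam i - lam i`, the same
for every `lam` with `lam j = x j` for `j < i` by triangularity. -/
def increment (i : Fin n) : triangular p n i →* Multiplicative ((Fin i → ZMod p) → ZMod p) where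
  toFun g := .ofAdd fun x => (g : Perm (Fin n → ZMod p)) (extendByZero n x) i
  map_one' := by
    ext x
    exact extendByZero_apply_self x
  map_mul' g h := by
    ext x
    have := g.2.1.mul_apply_sub h.2 (extendByZero n x)
    rw [extendByZero_apply_self, sub_zero, sub_zero, sub_zero] at this
    exact this

theorem toAdd_increment_apply {i : Fin n} (g : triangular p n i) (x : Fin i → ZMod p) :
    (increment p i g).toAdd x = (g : Perm (Fin n → ZMod p)) (extendByZero n x) i :=
  rfl

theorem increment_eq_one_iff {i : Fin n} (g : triangular p n i) :
    increment p i g = 1 ↔ (g : Perm (Fin n → ZMod p)) ∈ triangular p n (i + 1) := by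
  rw [← toAdd_eq_zero, funext_iff]
  simp only [toAdd_increment_apply, Pi.zero_apply]
  obtain ⟨g, hg, hg_fix⟩ := g
  refine ⟨fun h => ⟨hg, fun j hj lam => ?_⟩, fun h x => ?_⟩
  · rcases Nat.lt_succ_iff_lt_or_eq.mp hj with hj | hj
    · exact hg_fix j hj lam
    · obtain rfl : j = i := Fin.ext hj
      have := hg j lam _ (forall_lt_eq_extendByZero lam)
      rw [h, extendByZero_apply_self, sub_zero] at this
      exact sub_eq_zero.1 this
  · rw [h.2 i (Nat.lt_succ_self i), extendByZero_apply_self]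

theorem conj_sigmaPerm_apply_extendByZero {h : Perm (Fin n → ZMod p)} (hh : IsTriangular h)
    {i : Fin n} {a : Fin i → ZMod p} (ha : h 0 = extendByZero n a) (x : Fin i → ZMod p) :
    (h * sigmaPerm p n i * h⁻¹) (extendByZero n x) i =
      (Pi.single a 1 : (Fin i → ZMod p) → ZMod p) x := by
  set mu := h⁻¹ (extendByZero n x)
  have hmu : h mu i = 0 := by
    rw [show h mu = extendByZero n x from h.apply_symm_apply _, extendByZero_apply_self]
  have key := hh i _ mu fun j hj => sigmaPerm_apply_of_ne mu hj.ne
  have hzero : (∀ j < i, mu j = 0) ↔ x = a := by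
    have ha' : h⁻¹ (extendByZero n a) = 0 := by rw [← ha]; exact h.symm_apply_apply 0
    have := hh.inv.forall_lt_apply_eq_iff (k := i) (lam := extendByZero n x)
      (mu := extendByZero n a)
    rwa [ha', forall_lt_extendByZero_eq_iff] at this
  calc (h * sigmaPerm p n i * h⁻¹) (extendByZero n x) i = sigmaPerm p n i mu i - mu i := by
        simp only [Perm.mul_apply]
        linear_combination key + hmu
    _ = _ := by rw [sigmaPerm_apply_self_sub, Pi.single_apply]; exact if_congr hzero rfl rfl

theorem MonoidHom.surjective_of_single_mem_range {G ι : Type*} [Group G] [Finite ι]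
    [DecidableEq ι] {m : ℕ} (f : G →* Multiplicative (ι → ZMod m))
    (h : ∀ a, Multiplicative.ofAdd (Pi.single a 1) ∈ f.range) : Function.Surjective f := by
  intro y
  let S := AddSubgroup.toZModSubmodule m (Subgroup.toAddSubgroup' f.range)
  have hS : (⊤ : Submodule (ZMod m) (ι → ZMod m)) ≤ S := by
    rw [← (Pi.basisFun (ZMod m) ι).span_eq, Submodule.span_le]
    rintro _ ⟨a, rfl⟩
    rw [Pi.basisFun_apply]
    exact h a
  exact f.mem_range.1 (hS (Submodule.mem_top (x := y.toAdd)))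

theorem card_PSyl_inf_triangular [NeZero p] (i : Fin n) :
    Nat.card (PSyl p n ⊓ triangular p n i :) =
      p ^ p ^ (i : ℕ) * Nat.card (PSyl p n ⊓ triangular p n (i + 1) :) := by
  let f := (increment p i).comp (Subgroup.inclusion (inf_le_right (a := PSyl p n)))
  have hsurj : Function.Surjective f := f.surjective_of_single_mem_range fun a => by
    obtain ⟨h, hh, ha⟩ := exists_mem_PSyl_apply_eq 0 (extendByZero n a)
    refine ⟨⟨_, (PSyl p n).mul_mem ((PSyl p n).mul_mem hh (sigmaPerm_mem_PSyl i))
      ((PSyl p n).inv_mem hh),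
      conj_mem_triangular (isTriangular_of_mem_PSyl hh) (sigmaPerm_mem_triangular i)⟩, ?_⟩
    ext x
    exact conj_sigmaPerm_apply_extendByZero (isTriangular_of_mem_PSyl hh) ha x
  have hker : f.ker =
      (PSyl p n ⊓ triangular p n (i + 1)).subgroupOf (PSyl p n ⊓ triangular p n i) := by
    ext g
    have : (g : Perm (Fin n → ZMod p)) ∈ PSyl p n := g.2.1
    simp [Subgroup.mem_subgroupOf, f, increment_eq_one_iff, this]
  rw [← f.ker.card_mul_index, Subgroup.index_ker, f.range_eq_top.2 hsurj, Subgroup.card_top, hker,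
    Nat.card_congr (Subgroup.subgroupOfEquivOfLe
      (inf_le_inf_left _ (triangular_anti (Nat.le_succ _)))).toEquiv, mul_comm]
  simp

theorem card_PSyl_eq_mul [NeZero p] {k : ℕ} (hk : k ≤ n) :
    Nat.card (PSyl p n) =
      p ^ (∑ i ∈ range k, p ^ i) * Nat.card (PSyl p n ⊓ triangular p n k :) := by
  induction k with
  | zero => simp [inf_of_le_left PSyl_le_triangular]
  | succ k ih =>
    rw [ih (by omega), card_PSyl_inf_triangular ⟨k, hk⟩, sum_range_succ, pow_add, mul_assoc]

theorem card_PSyl [NeZero p] : Nat.card (PSyl p n) = p ^ (∑ i ∈ range n, p ^ i) := by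
  simp [card_PSyl_eq_mul le_rfl, triangular_eq_bot]

theorem factorization_factorial_prime_pow (hp : p.Prime) :
    (p ^ n).factorial.factorization p = ∑ i ∈ range n, p ^ i := by
  have hdigits : (p.digits (p ^ n)).sum = 1 := by
    have := Nat.digits_base_pow_mul (k := n) hp.one_lt one_pos
    rw [mul_one] at this
    simp [this, Nat.digits_of_lt p 1 one_ne_zero hp.one_lt]
  apply Nat.eq_of_mul_eq_mul_left (Nat.sub_pos_of_lt hp.one_lt)
  rw [Nat.sub_one_mul_factorization_factorial hp, hdigits, mul_comm,
    geom_sum_mul_of_one_le hp.one_le]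

theorem card_PSyl_and_isSylow_and_transitive_general (hp : p.Prime) :
    Nat.card (PSyl p n) = p ^ (∑ i ∈ Finset.range n, p ^ i) ∧
    (∃ S : Sylow p (Equiv.Perm (Fin n → ZMod p)),
      (S : Subgroup (Equiv.Perm (Fin n → ZMod p))) = PSyl p n) ∧
    (∀ v w : Fin n → ZMod p, ∃ g ∈ PSyl p n, g v = w) := by
  have := Fact.mk hp
  refine ⟨card_PSyl, ⟨Sylow.ofCard (PSyl p n) ?_, rfl⟩, exists_mem_PSyl_apply_eq⟩
  rw [card_PSyl, Nat.card_perm, Nat.card_fun, Nat.card_zmod, Nat.card_fin,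
    factorization_factorial_prime_pow hp]

/-- The subgroup `⟨σ_0, …, σ_{n-1}⟩` of `Sym(F_p^n)` has order
`p ^ (1 + p + ⋯ + p^{n-1})`, hence is a Sylow `p`-subgroup of `Sym(F_p^n)`, and it
acts transitively on `F_p^n`. -/
theorem card_PSyl_and_isSylow_and_transitive (hp : p.Prime) (hn : 1 ≤ n) :
    Nat.card (PSyl p n) = p ^ (∑ i ∈ Finset.range n, p ^ i) ∧
    (∃ S : Sylow p (Equiv.Perm (Fin n → ZMod p)),
      (S : Subgroup (Equiv.Perm (Fin n → ZMod p))) = PSyl p n) ∧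
    (∀ v w : Fin n → ZMod p, ∃ g ∈ PSyl p n, g v = w) :=
  card_PSyl_and_isSylow_and_transitive_general hp
end

section
/- Let P be a finite 2-group acting on a finite abelian 2-group M, and let Q = P ≀ C_2 = (P × P) ⋊ C_2 act naturally on M² = M ⊕ M (the two copies of P acting coordinatewise and the generator of C_2 swapping the two coordinates). Then: (1) if [P,M] has index 2 in M, then M² ⊋ [Q,M²] ⊋ [Q,[Q,M²]] = [P,M] × [P,M]; (2) if the action of P on M is uniserial, then the action of Q on M² is uniserial. -/
/-- The automorphism of `Q^p = (ZMod p → Q)` cyclically shifting coordinates by `c`. -/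
def shiftAut (p : ℕ) (Q : Type) [Group Q] (c : ZMod p) : MulAut (ZMod p → Q) where
  toFun x := fun i => x (i - c)
  invFun x := fun i => x (i + c)
  left_inv x := by funext i; simp
  right_inv x := by funext i; simp
  map_mul' x y := rfl

/-- The action of the cyclic group `C_p` on `Q^p` by cyclic coordinate shifts. -/
def shiftHom (p : ℕ) (Q : Type) [Group Q] :
    Multiplicative (ZMod p) →* MulAut (ZMod p → Q) :=
  MonoidHom.mk' (fun c => shiftAut p Q c.toAdd) (by
    intro a b
    apply MulEquiv.ext
    intro x
    funext i
    show x (i - (a * b).toAdd) = x (i - a.toAdd - b.toAdd)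
    rw [sub_sub]
    rfl)

/-- The wreath product `Q ≀ C_p` with base group `B = Q^p`, where a generator of
`C_p` cyclically permutes the `p` factors of `B`. -/
abbrev WreathCp (p : ℕ) (Q : Type) [Group Q] :=
  SemidirectProduct (ZMod p → Q) (Multiplicative (ZMod p)) (shiftHom p Q)


/-- For `ρ` an action of `G` on an abelian group `A` by automorphisms and `N ≤ A`,
the subgroup `[G, N]` generated by all `(g • m) * m⁻¹` with `g ∈ G`, `m ∈ N`. -/
def commSub {G A : Type} [Group G] [CommGroup A] (ρ : G →* MulAut A)
    (N : Subgroup A) : Subgroup A :=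
  Subgroup.closure {x | ∃ g : G, ∃ m ∈ N, x = ρ g m * m⁻¹}

/-- An action `ρ` of `G` on an abelian group `A` is uniserial if `[G, N]` has index
`p` in `N` for every nontrivial `G`-invariant subgroup `N` of `A`. -/
def IsUniserialMul (p : ℕ) {G A : Type} [Group G] [CommGroup A]
    (ρ : G →* MulAut A) : Prop :=
  ∀ N : Subgroup A, N ≠ ⊥ → (∀ g : G, N.map (ρ g).toMonoidHom = N) →
    (commSub ρ N).relIndex N = p

/-- The coordinatewise action of the base group `P × P = (ZMod 2 → P)` on
`M² = (ZMod 2 → M)`. -/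
def baseAct {P M : Type} [Group P] [CommGroup M] (φ : P →* MulAut M) :
    (ZMod 2 → P) →* MulAut (ZMod 2 → M) :=
  MonoidHom.mk' (fun a => MulEquiv.piCongrRight (fun i => φ (a i))) (by
    intro a b
    apply MulEquiv.ext
    intro x
    funext i
    show φ (a i * b i) (x i) = φ (a i) (φ (b i) (x i))
    rw [map_mul]
    rfl)

/-- The natural action of the wreath product `Q = P ≀ C_2` on `M² = M ⊕ M`: the two
copies of `P` act coordinatewise and the generator of `C_2` swaps the coordinates. -/
def wreathAct (P M : Type) [Group P] [CommGroup M] (φ : P →* MulAut M) :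
    WreathCp 2 P →* MulAut (ZMod 2 → M) :=
  SemidirectProduct.lift (baseAct φ) (shiftHom 2 M) (by
    intro g
    apply MonoidHom.ext
    intro a
    apply MulEquiv.ext
    intro x
    funext i
    show φ (a (i - g.toAdd)) (x i) = φ (a (i - g.toAdd)) (x (i - g.toAdd + g.toAdd))
    rw [sub_add_cancel])

/-!
Write `X` for the projection of a `Q`-invariant subgroup `N ≤ M²` to the first coordinate and
`Y = {y | (y, 1) ∈ N}`. Acting by `(g, 1)` in the base group gives `[P, X] ≤ Y ≤ X`, so when
`[P, X]` has index `2` in `X` either `N = X × X` or `N = {(x, y) ∈ X × X | x y ∈ [P, X]}`.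
A direct computation with the generators of `Q` shows
`[Q, U × U] = {(x, y) ∈ U × U | x y ∈ [P, U]}` and, when `U / [P, U]` has exponent `2`,
`[Q, {(x, y) ∈ U × U | x y ∈ [P, U]}] = [P, U] × [P, U]`; both inclusions have index
`|U : [P, U]|`, since the product map and the first projection are onto `U`. With `U = M` this
is part (1), and with `U = X` it gives uniseriality of `Q` on `M²`.
-/

section CommSub

variable {G A : Type} [Group G] [CommGroup A] (ρ : G →* MulAut A)

theorem apply_mul_inv_mem_commSub {N : Subgroup A} (g : G) {m : A} (hm : m ∈ N) :
    ρ g m * m⁻¹ ∈ commSub ρ N :=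
  Subgroup.subset_closure ⟨g, m, hm, rfl⟩

theorem commSub_le_iff {N K : Subgroup A} :
    commSub ρ N ≤ K ↔ ∀ g : G, ∀ m ∈ N, ρ g m * m⁻¹ ∈ K := by
  rw [commSub, Subgroup.closure_le]
  exact ⟨fun h g m hm => h ⟨g, m, hm, rfl⟩, fun h _ ⟨g, m, hm, hx⟩ => hx ▸ h g m hm⟩

theorem forall_map_eq_iff {N : Subgroup A} :
    (∀ g : G, N.map (ρ g).toMonoidHom = N) ↔ ∀ g : G, ∀ m ∈ N, ρ g m ∈ N := by
  refine ⟨fun hN g m hm => hN g ▸ Subgroup.mem_map_of_mem _ hm, fun hN g => ?_⟩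
  refine le_antisymm (Subgroup.map_le_iff_le_comap.mpr fun m hm => hN g m hm) fun m hm => ?_
  refine ⟨ρ g⁻¹ m, hN g⁻¹ m hm, ?_⟩
  show ρ g (ρ g⁻¹ m) = m
  rw [← MulAut.mul_apply, ← map_mul, mul_inv_cancel, map_one, MulAut.one_apply]

theorem commSub_le_self {N : Subgroup A} (hN : ∀ g : G, ∀ m ∈ N, ρ g m ∈ N) :
    commSub ρ N ≤ N :=
  (commSub_le_iff ρ).mpr fun g m hm => mul_mem (hN g m hm) (inv_mem hm)

end CommSub

theorem Subgroup.le_of_map_le_of_inf_ker_le {G H : Type} [Group G] [Group H] {f : G →* H}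
    {N S : Subgroup G} (hNS : N ≤ S) (hmap : S.map f ≤ N.map f) (hker : S ⊓ f.ker ≤ N) :
    S ≤ N := by
  intro x hx
  obtain ⟨n, hn, hnx⟩ := hmap ⟨x, hx, rfl⟩
  have : n⁻¹ * x ∈ N := hker ⟨S.mul_mem (S.inv_mem (hNS hn)) hx, by simp [hnx]⟩
  simpa using N.mul_mem hn this

theorem Subgroup.eq_or_eq_of_relIndex_eq_two {G : Type} [Group G] {H K L : Subgroup G}
    (hHK : H ≤ K) (hKL : K ≤ L) (h : H.relIndex L = 2) : K = L ∨ K = H := by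
  rw [← relIndex_mul_relIndex H K L hHK hKL] at h
  rcases Nat.prime_two.eq_one_or_self_of_dvd _ (Dvd.intro _ h) with hHK' | hHK'
  · exact .inr (le_antisymm (relIndex_eq_one.mp hHK') hHK)
  · rw [hHK'] at h
    exact .inl (le_antisymm hKL (relIndex_eq_one.mp (by omega)))

theorem Subgroup.mul_mem_iff_of_relIndex_eq_two {G : Type} [Group G] {H K : Subgroup G}
    (h : H.relIndex K = 2) {a b : G} (ha : a ∈ K) (hb : b ∈ K) :
    a * b ∈ H ↔ (a ∈ H ↔ b ∈ H) :=
  mul_mem_iff_of_index_two (H := H.subgroupOf K) h (a := ⟨a, ha⟩) (b := ⟨b, hb⟩)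

theorem ZMod.eq_zero_or_eq_one_of_two (i : ZMod 2) : i = 0 ∨ i = 1 := by
  revert i
  decide

theorem ZMod.forall_zmod_two {p : ZMod 2 → Prop} : (∀ i, p i) ↔ p 0 ∧ p 1 :=
  ⟨fun h => ⟨h 0, h 1⟩,
    fun h i => (eq_zero_or_eq_one_of_two i).elim (· ▸ h.1) (· ▸ h.2)⟩

theorem ZMod.funext_two {α : Type} {x y : ZMod 2 → α} (h0 : x 0 = y 0) (h1 : x 1 = y 1) :
    x = y :=
  funext (forall_zmod_two.mpr ⟨h0, h1⟩)

@[simp] theorem ZMod.one_add_one_of_two : (1 : ZMod 2) + 1 = 0 := rfl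

section Pairs

variable {M : Type} [CommGroup M]

def pairs (U : Subgroup M) : Subgroup (ZMod 2 → M) :=
  Subgroup.pi Set.univ fun _ => U

def pairsProdIn (U V : Subgroup M) : Subgroup (ZMod 2 → M) :=
  pairs U ⊓ V.comap (Pi.evalMonoidHom (fun _ => M) 0 * Pi.evalMonoidHom (fun _ => M) 1)

variable {U V : Subgroup M} {x : ZMod 2 → M}

theorem mem_pairs : x ∈ pairs U ↔ x 0 ∈ U ∧ x 1 ∈ U := by
  simp [pairs, Subgroup.mem_pi, ZMod.forall_zmod_two]

theorem mem_pairsProdIn :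
    x ∈ pairsProdIn U V ↔ (x 0 ∈ U ∧ x 1 ∈ U) ∧ x 0 * x 1 ∈ V := by
  rw [pairsProdIn, Subgroup.mem_inf, mem_pairs]
  rfl

theorem mulSingle_mem_pairs (i : ZMod 2) (u : M) : Pi.mulSingle i u ∈ pairs U ↔ u ∈ U := by
  simp [pairs, Subgroup.mulSingle_mem_pi]

theorem pairs_top : pairs (⊤ : Subgroup M) = ⊤ :=
  Subgroup.pi_top _

theorem pairs_bot : pairs (⊥ : Subgroup M) = ⊥ :=
  Subgroup.pi_bot

theorem pairs_le_pairsProdIn_top : pairs V ≤ pairsProdIn ⊤ V :=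
  fun _ hx => mem_pairsProdIn.mpr
    ⟨⟨trivial, trivial⟩, mul_mem (mem_pairs.mp hx).1 (mem_pairs.mp hx).2⟩

theorem map_eval_pairs (i : ZMod 2) : (pairs U).map (Pi.evalMonoidHom _ i) = U := by
  refine le_antisymm (fun _ ⟨x, hx, hxu⟩ => hxu ▸ hx i trivial) fun u hu => ?_
  exact ⟨Pi.mulSingle i u, (mulSingle_mem_pairs i u).mpr hu, by simp⟩

theorem map_eval_pairsProdIn (i : ZMod 2) :
    (pairsProdIn U V).map (Pi.evalMonoidHom _ i) = U := by
  refine le_antisymm ((Subgroup.map_mono inf_le_left).trans (map_eval_pairs i).le) fun u hu => ?_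
  have hx : (fun j => if j = i then u else u⁻¹) ∈ pairsProdIn U V := by
    obtain rfl | rfl := ZMod.eq_zero_or_eq_one_of_two i <;>
      simp [mem_pairsProdIn, hu, V.one_mem]
  exact ⟨_, hx, by simp⟩

theorem map_coordProd_pairs :
    (pairs U).map (Pi.evalMonoidHom (fun _ => M) 0 * Pi.evalMonoidHom (fun _ => M) 1) = U := by
  refine le_antisymm (fun _ ⟨x, hx, hxu⟩ => hxu ▸ mul_mem (hx 0 trivial) (hx 1 trivial))
    fun u hu => ⟨Pi.mulSingle 0 u, (mulSingle_mem_pairs 0 u).mpr hu, by simp⟩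

theorem relIndex_pairsProdIn_pairs : (pairsProdIn U V).relIndex (pairs U) = V.relIndex U := by
  rw [pairsProdIn, Subgroup.inf_relIndex_left, Subgroup.relIndex_comap, map_coordProd_pairs]

theorem relIndex_pairs_pairsProdIn (hVU : V ≤ U) :
    (pairs V).relIndex (pairsProdIn U V) = V.relIndex U := by
  have : pairs V = pairsProdIn U V ⊓ V.comap (Pi.evalMonoidHom _ 0) := by
    ext x
    simp only [Subgroup.mem_inf, mem_pairsProdIn, mem_pairs, Subgroup.mem_comap,
      Pi.evalMonoidHom_apply]
    constructor
    · rintro ⟨h0, h1⟩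
      exact ⟨⟨⟨hVU h0, hVU h1⟩, mul_mem h0 h1⟩, h0⟩
    · rintro ⟨⟨-, h01⟩, h0⟩
      exact ⟨h0, by simpa using mul_mem (inv_mem h0) h01⟩
  rw [this, Subgroup.inf_relIndex_left, Subgroup.relIndex_comap, map_eval_pairsProdIn]

end Pairs

section WreathAct

variable {P M : Type} [Group P] [CommGroup M] (φ : P →* MulAut M) {U : Subgroup M}

theorem wreathAct_inl_apply (a : ZMod 2 → P) (x : ZMod 2 → M) :
    wreathAct P M φ (.inl a) x = fun i => φ (a i) (x i) := by
  rw [wreathAct, SemidirectProduct.lift_inl]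
  rfl

theorem wreathAct_inr_apply (x : ZMod 2 → M) :
    wreathAct P M φ (.inr (.ofAdd 1)) x = fun i => x (i + 1) := by
  rw [wreathAct, SemidirectProduct.lift_inr]
  funext i
  fin_cases i <;> rfl

/-- Every element of `Q` is a base element times a shift `s`, and
`[b s, m] = [b, s m] [s, m]`. -/
theorem commSub_wreathAct_le {S K : Subgroup (ZMod 2 → M)}
    (hS : ∀ x ∈ S, (fun i => x (i + 1)) ∈ S)
    (hbase : ∀ a : ZMod 2 → P, ∀ x ∈ S, (fun i => φ (a i) (x i)) * x⁻¹ ∈ K)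
    (hswap : ∀ x ∈ S, (fun i => x (i + 1)) * x⁻¹ ∈ K) :
    commSub (wreathAct P M φ) S ≤ K := by
  refine (commSub_le_iff _).mpr fun g x hx => ?_
  obtain ⟨y, hy, hxy, hyK⟩ :
      ∃ y ∈ S, wreathAct P M φ (.inr g.right) x = y ∧ y * x⁻¹ ∈ K := by
    rcases (by decide : ∀ c : Multiplicative (ZMod 2), c = 1 ∨ c = .ofAdd 1) g.right with h | h
    · exact ⟨x, hx, by simp [h], by simp [K.one_mem]⟩
    · exact ⟨_, hS x hx, by rw [h, wreathAct_inr_apply], hswap x hx⟩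
  rw [← SemidirectProduct.inl_left_mul_inr_right g, map_mul, MulAut.mul_apply, hxy,
    wreathAct_inl_apply]
  simpa only [mul_assoc, inv_mul_cancel_left] using mul_mem (hbase g.left y hy) hyK

theorem mulSingle_mem_commSub_wreathAct {S : Subgroup (ZMod 2 → M)} (i : ZMod 2) {v : M}
    (hv : v ∈ commSub φ (S.map (Pi.evalMonoidHom _ i))) :
    Pi.mulSingle i v ∈ commSub (wreathAct P M φ) S := by
  suffices commSub φ (S.map (Pi.evalMonoidHom _ i)) ≤
      (commSub (wreathAct P M φ) S).comap (MonoidHom.mulSingle _ i) from this hv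
  rw [commSub_le_iff]
  rintro g _ ⟨x, hx, rfl⟩
  show (Pi.mulSingle i (φ g (x i) * (x i)⁻¹) : ZMod 2 → M) ∈ commSub (wreathAct P M φ) S
  convert apply_mul_inv_mem_commSub (wreathAct P M φ) (.inl (Pi.mulSingle i g)) hx using 1
  funext j
  rw [wreathAct_inl_apply]
  by_cases hj : j = i
  · subst hj
    simp
  · simp [Pi.mulSingle_eq_of_ne hj]

theorem commSub_wreathAct_pairs (hU : commSub φ U ≤ U) :
    commSub (wreathAct P M φ) (pairs U) = pairsProdIn U (commSub φ U) := by
  apply le_antisymm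
  · refine commSub_wreathAct_le φ (fun x hx => ?_) (fun a x hx => ?_) fun x hx => ?_
    · simp only [mem_pairs, ZMod.one_add_one_of_two, zero_add] at hx ⊢
      exact hx.symm
    · have h0 := apply_mul_inv_mem_commSub φ (a 0) (mem_pairs.mp hx).1
      have h1 := apply_mul_inv_mem_commSub φ (a 1) (mem_pairs.mp hx).2
      exact mem_pairsProdIn.mpr ⟨⟨hU h0, hU h1⟩, mul_mem h0 h1⟩
    · obtain ⟨h0, h1⟩ := mem_pairs.mp hx
      refine mem_pairsProdIn.mpr ⟨⟨?_, ?_⟩, ?_⟩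
      · simpa using mul_mem h1 (inv_mem h0)
      · simpa using mul_mem h0 (inv_mem h1)
      · simp [mul_mul_mul_comm, (commSub φ U).one_mem]
  · intro x hx
    obtain ⟨⟨-, hx1⟩, hprod⟩ := mem_pairsProdIn.mp hx
    have hfirst := mulSingle_mem_commSub_wreathAct φ (S := pairs U) 0
      (by rwa [map_eval_pairs])
    have hswap := apply_mul_inv_mem_commSub (wreathAct P M φ) (.inr (.ofAdd 1))
      ((mulSingle_mem_pairs 0 (x 1)).mpr hx1)
    convert mul_mem hfirst hswap
    rw [wreathAct_inr_apply]
    exact ZMod.funext_two (by simp) (by simp)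

theorem commSub_wreathAct_pairsProdIn (hsq : ∀ u ∈ U, u * u ∈ commSub φ U) :
    commSub (wreathAct P M φ) (pairsProdIn U (commSub φ U)) = pairs (commSub φ U) := by
  apply le_antisymm
  · refine commSub_wreathAct_le φ (fun x hx => ?_) (fun a x hx => ?_) fun x hx => ?_
    · simp only [mem_pairsProdIn, ZMod.one_add_one_of_two, zero_add] at hx ⊢
      exact ⟨hx.1.symm, mul_comm (x 0) (x 1) ▸ hx.2⟩
    · exact mem_pairs.mpr ⟨apply_mul_inv_mem_commSub φ (a 0) (mem_pairsProdIn.mp hx).1.1,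
        apply_mul_inv_mem_commSub φ (a 1) (mem_pairsProdIn.mp hx).1.2⟩
    · obtain ⟨⟨h0, h1⟩, h01⟩ := mem_pairsProdIn.mp hx
      refine mem_pairs.mpr ⟨?_, ?_⟩
      · simpa [mul_inv_rev, mul_comm] using mul_mem h01 (inv_mem (hsq _ h0))
      · simpa [mul_inv_rev, mul_comm] using mul_mem h01 (inv_mem (hsq _ h1))
  · intro x hx
    have h0 := mulSingle_mem_commSub_wreathAct φ (S := pairsProdIn U (commSub φ U)) 0
      (by rw [map_eval_pairsProdIn]; exact (mem_pairs.mp hx).1)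
    have h1 := mulSingle_mem_commSub_wreathAct φ (S := pairsProdIn U (commSub φ U)) 1
      (by rw [map_eval_pairsProdIn]; exact (mem_pairs.mp hx).2)
    convert mul_mem h0 h1
    exact ZMod.funext_two (by simp) (by simp)

end WreathAct

section InvariantSubgroups

variable {M : Type} [CommGroup M]

def firstProj (N : Subgroup (ZMod 2 → M)) : Subgroup M :=
  N.map (Pi.evalMonoidHom _ 0)

def firstSlice (N : Subgroup (ZMod 2 → M)) : Subgroup M :=
  N.comap (MonoidHom.mulSingle (fun _ : ZMod 2 => M) 0)

theorem mem_firstProj {N : Subgroup (ZMod 2 → M)} {y : M} :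
    y ∈ firstProj N ↔ ∃ x ∈ N, x 0 = y :=
  Subgroup.mem_map

theorem mem_firstSlice {N : Subgroup (ZMod 2 → M)} {y : M} :
    y ∈ firstSlice N ↔ Pi.mulSingle 0 y ∈ N :=
  Iff.rfl

theorem firstSlice_le_firstProj (N : Subgroup (ZMod 2 → M)) : firstSlice N ≤ firstProj N :=
  fun y hy => mem_firstProj.mpr ⟨_, hy, by simp⟩

variable {P : Type} [Group P] (φ : P →* MulAut M) {N : Subgroup (ZMod 2 → M)}

theorem swap_mem (hN : ∀ g, ∀ x ∈ N, wreathAct P M φ g x ∈ N) {x : ZMod 2 → M}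
    (hx : x ∈ N) :
    (fun i => x (i + 1)) ∈ N :=
  wreathAct_inr_apply φ x ▸ hN _ x hx

theorem le_pairs_firstProj (hN : ∀ g, ∀ x ∈ N, wreathAct P M φ g x ∈ N) :
    N ≤ pairs (firstProj N) :=
  fun x hx => mem_pairs.mpr
    ⟨mem_firstProj.mpr ⟨x, hx, rfl⟩, mem_firstProj.mpr ⟨_, swap_mem φ hN hx, by simp⟩⟩

theorem firstProj_ne_bot (hN : ∀ g, ∀ x ∈ N, wreathAct P M φ g x ∈ N) (hNbot : N ≠ ⊥) :
    firstProj N ≠ ⊥ := fun h =>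
  hNbot (eq_bot_iff.mpr (pairs_bot (M := M) ▸ h ▸ le_pairs_firstProj φ hN))

theorem map_firstProj (hN : ∀ g, ∀ x ∈ N, wreathAct P M φ g x ∈ N) (g : P) :
    (firstProj N).map (φ g).toMonoidHom = firstProj N := by
  refine (forall_map_eq_iff φ).mpr (fun g _ hm => ?_) g
  obtain ⟨x, hx, rfl⟩ := mem_firstProj.mp hm
  exact mem_firstProj.mpr ⟨_, hN (.inl fun _ => g) x hx, by simp [wreathAct_inl_apply]⟩

theorem commSub_firstProj_le_firstSlice (hN : ∀ g, ∀ x ∈ N, wreathAct P M φ g x ∈ N) :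
    commSub φ (firstProj N) ≤ firstSlice N :=
  fun _ hv => mem_firstSlice.mpr (commSub_le_self _ hN (mulSingle_mem_commSub_wreathAct φ 0 hv))

theorem firstSlice_mem_iff (hN : ∀ g, ∀ x ∈ N, wreathAct P M φ g x ∈ N)
    {x : ZMod 2 → M} (hx : x ∈ N) : x 0 ∈ firstSlice N ↔ x 1 ∈ firstSlice N := by
  suffices h : ∀ x ∈ N, x 0 ∈ firstSlice N → x 1 ∈ firstSlice N from
    ⟨h x hx, fun h1 => by simpa using h _ (swap_mem φ hN hx) (by simpa using h1)⟩
  intro x hx h0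
  rw [mem_firstSlice]
  convert swap_mem φ hN (mul_mem hx (inv_mem (mem_firstSlice.mp h0))) using 1
  exact ZMod.funext_two (by simp) (by simp)

theorem eq_of_le_of_firstSlice (hN : ∀ g, ∀ x ∈ N, wreathAct P M φ g x ∈ N)
    {S : Subgroup (ZMod 2 → M)} (hNS : N ≤ S) (hS : S ≤ pairs (firstProj N))
    (hslice : ∀ s ∈ S, s 1 = 1 → s 0 ∈ firstSlice N) : N = S := by
  refine le_antisymm hNS
    (Subgroup.le_of_map_le_of_inf_ker_le (f := Pi.evalMonoidHom _ 1) hNS ?_ ?_)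
  · rintro _ ⟨s, hs, rfl⟩
    obtain ⟨x, hx, hxs⟩ := (mem_pairs.mp (hS hs)).2
    exact ⟨_, swap_mem φ hN hx, by simpa using hxs⟩
  · rintro s ⟨hs, hs1 : s 1 = 1⟩
    convert mem_firstSlice.mp (hslice s hs hs1) using 1
    exact ZMod.funext_two (by simp) (by simp [hs1])

theorem eq_pairs_or_eq_pairsProdIn (hN : ∀ g, ∀ x ∈ N, wreathAct P M φ g x ∈ N)
    (hrel : (commSub φ (firstProj N)).relIndex (firstProj N) = 2) :
    N = pairs (firstProj N) ∨ N = pairsProdIn (firstProj N) (commSub φ (firstProj N)) := by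
  rcases Subgroup.eq_or_eq_of_relIndex_eq_two (commSub_firstProj_le_firstSlice φ hN)
    (firstSlice_le_firstProj N) hrel with hY | hY
  · refine .inl (eq_of_le_of_firstSlice φ hN (le_pairs_firstProj φ hN) le_rfl ?_)
    exact fun s hs _ => hY ▸ (mem_pairs.mp hs).1
  · refine .inr (eq_of_le_of_firstSlice φ hN (fun x hx => ?_) inf_le_left fun s hs hs1 => ?_)
    · have hx' := mem_pairs.mp (le_pairs_firstProj φ hN hx)
      refine mem_pairsProdIn.mpr ⟨hx', ?_⟩
      rw [Subgroup.mul_mem_iff_of_relIndex_eq_two hrel hx'.1 hx'.2, ← hY]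
      exact firstSlice_mem_iff φ hN hx
    · simpa [hs1, hY] using (mem_pairsProdIn.mp hs).2

end InvariantSubgroups

theorem wreath_action_uniserial_general (P M : Type) [Group P] [CommGroup M] (φ : P →* MulAut M) :
    ((commSub φ (⊤ : Subgroup M)).index = 2 →
      commSub (wreathAct P M φ) ⊤ < ⊤ ∧
      commSub (wreathAct P M φ) (commSub (wreathAct P M φ) ⊤)
        < commSub (wreathAct P M φ) ⊤ ∧
      commSub (wreathAct P M φ) (commSub (wreathAct P M φ) ⊤)
        = Subgroup.pi Set.univ (fun _ : ZMod 2 => commSub φ ⊤)) ∧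
    (IsUniserialMul 2 φ → IsUniserialMul 2 (wreathAct P M φ)) := by
  refine ⟨fun hC => ?_, fun hUni N hNbot hinv => ?_⟩
  · have hrel : (commSub φ ⊤).relIndex ⊤ = 2 := by rwa [Subgroup.relIndex_top_right]
    have hQM : commSub (wreathAct P M φ) ⊤ = pairsProdIn ⊤ (commSub φ ⊤) := by
      rw [← commSub_wreathAct_pairs φ le_top, pairs_top]
    rw [hQM, commSub_wreathAct_pairsProdIn φ fun u _ => Subgroup.mul_self_mem_of_index_two hC u]
    refine ⟨lt_of_le_not_ge le_top ?_, lt_of_le_not_ge pairs_le_pairsProdIn_top ?_, rfl⟩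
    · rw [← pairs_top, ← Subgroup.relIndex_eq_one, relIndex_pairsProdIn_pairs, hrel]
      decide
    · rw [← Subgroup.relIndex_eq_one, relIndex_pairs_pairsProdIn le_top, hrel]
      decide
  · have hN := (forall_map_eq_iff _).mp hinv
    have hrel := hUni _ (firstProj_ne_bot φ hN hNbot) (map_firstProj φ hN)
    have hX := commSub_le_self φ ((forall_map_eq_iff φ).mp (map_firstProj φ hN))
    rcases eq_pairs_or_eq_pairsProdIn φ hN hrel with h | h <;> rw [h]
    · rwa [commSub_wreathAct_pairs φ hX, relIndex_pairsProdIn_pairs]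
    · rwa [commSub_wreathAct_pairsProdIn φ fun u hu => ?_, relIndex_pairs_pairsProdIn hX]
      exact (Subgroup.mul_mem_iff_of_relIndex_eq_two hrel hu hu).mpr Iff.rfl

/-- Let `P` be a finite `2`-group acting on the finite abelian `2`-group `M`, and let
`Q = P ≀ C_2` act naturally on `M²`.  Then: (1) if `[P,M]` has index `2` in `M`, then
`M² > [Q,M²] > [Q,[Q,M²]] = [P,M] × [P,M]`; (2) if the action of `P` on `M` is
uniserial, then so is the action of `Q` on `M²`. -/
theorem wreath_action_uniserial (P M : Type) [Group P] [Finite P]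
    (hP : IsPGroup 2 P) [CommGroup M] [Finite M] (hM : IsPGroup 2 M)
    (φ : P →* MulAut M) :
    ((commSub φ (⊤ : Subgroup M)).index = 2 →
      commSub (wreathAct P M φ) ⊤ < ⊤ ∧
      commSub (wreathAct P M φ) (commSub (wreathAct P M φ) ⊤)
        < commSub (wreathAct P M φ) ⊤ ∧
      commSub (wreathAct P M φ) (commSub (wreathAct P M φ) ⊤)
        = Subgroup.pi Set.univ (fun _ : ZMod 2 => commSub φ ⊤)) ∧
    (IsUniserialMul 2 φ → IsUniserialMul 2 (wreathAct P M φ)) :=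
  wreath_action_uniserial_general P M φ
end

section
/- Let p be a prime and n ≥ 1. The natural permutation action of P_n on the F_p-vector space with basis F_p^n (that is, the module (F_p)^{p^n} on which P_n ≤ Sym(F_p^n) acts by permuting coordinates) is uniserial of length p^n. -/
variable (p n : ℕ)

/-- The additive automorphism of the permutation module `(F_p)^{F_p^n}` induced by a
permutation `g` of `F_p^n` (permutation of coordinates). -/
def permAddAut (g : Equiv.Perm (Fin n → ZMod p)) :
    AddAut ((Fin n → ZMod p) → ZMod p) where
  toFun f := f ∘ g.symm
  invFun f := f ∘ g
  left_inv f := by funext x; simp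
  right_inv f := by funext x; simp
  map_add' f₁ f₂ := rfl

/-!
Let `τ = σ_{n-1} ⋯ σ_1 σ_0`. If `a` is read through its base-`p` digits as a point of `F_p^n`,
then `τ` sends `a` to `a + 1`: it is the odometer, a `p^n`-cycle. For the functionals
`φ_j f = ∑_{a < p^n} C(a, j) f(a)`, Pascal's rule gives `φ_{j+1} ∘ (τ - 1) = φ_j`
(the wrap-around term vanishes because `p ∣ C(p^n, j + 1)`), and `φ_0 ∘ (τ - 1) = 0`.
So `τ - 1` is one nilpotent Jordan block. If `k` is least with `φ_k ≠ 0` on `N`, say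
`φ_k m₀ ≠ 0` with `m₀ ∈ N`, then the vectors `(τ - 1)^(s+1) m₀ ∈ [P_n, N]` span `N ∩ ker φ_k`,
which has index `p` in `N`.
On the other hand `P_n` consists of triangular permutations, so it is a `p`-group, and then
`[P_n, N] ≠ N`. Hence `[P_n, N] = N ∩ ker φ_k`.
-/

open Finset Equiv

variable {p n}

theorem AddSubgroup.relIndex_eq_of_le_of_not_le {G : Type*} [AddGroup G]
    {H C N : AddSubgroup G} (hp : p.Prime) (hH : H.relIndex N = p) (hHC : H ≤ C)
    (hNC : ¬ N ≤ C) : C.relIndex N = p := by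
  rcases (Nat.dvd_prime hp).mp (hH ▸ AddSubgroup.relIndex_dvd_of_le_left N hHC) with h | h
  · exact absurd (AddSubgroup.relIndex_eq_one.mp h) hNC
  · exact h

section ZModModule

variable [Fact p.Prime] {M : Type*} [AddCommGroup M] [Module (ZMod p) M]

theorem AddSubgroup.relIndex_ker_inf_eq (ψ : Module.Dual (ZMod p) M) {N : AddSubgroup M}
    {m : M} (hm : m ∈ N) (hψ : ψ m ≠ 0) : (ψ.toAddMonoidHom.ker ⊓ N).relIndex N = p := by
  rw [AddSubgroup.inf_relIndex_right, AddSubgroup.relIndex_ker]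
  refine (Nat.card_congr (Equiv.subtypeUnivEquiv fun y => ?_)).trans (Nat.card_zmod p)
  refine ⟨(y / ψ m) • m, (AddSubgroup.toZModSubmodule p N).smul_mem _ hm, ?_⟩
  simp [div_mul_cancel₀ _ hψ]

/-- A nonzero functional on `N` fixed by `G`, which exists by counting the fixed points of the
`p`-group `G` on the dual of `N`, kills `[G, N]`. -/
theorem not_le_closure_sub_of_isPGroup {Γ : Type*} [Group Γ] (ρ : Representation (ZMod p) Γ M)
    {G : Subgroup Γ} (hG : IsPGroup p G) {N : AddSubgroup M} [Finite N]
    (hN : ∀ g ∈ G, ∀ m ∈ N, ρ g m ∈ N) (hN₀ : N ≠ ⊥) :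
    ¬ N ≤ AddSubgroup.closure {x | ∃ g ∈ G, ∃ m ∈ N, x = ρ g m - m} := by
  let act (g : G) : N →+ N :=
    ((ρ g).toAddMonoidHom.domRestrict N).codRestrict N fun m => hN g g.2 m m.2
  let _ : MulAction G (N →+ ZMod p) :=
    { smul g χ := χ.comp (act g⁻¹)
      one_smul χ := by ext m; show χ _ = χ _; simp [act]
      mul_smul g h χ := by ext m; show χ _ = χ _; simp [act] }
  obtain ⟨χ₀, hχ₀⟩ : ∃ χ : N →+ ZMod p, χ ≠ 0 := by
    obtain ⟨m, hm⟩ := N.ne_bot_iff_exists_ne_zero.mp hN₀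
    obtain ⟨ψ, hψ⟩ : ∃ ψ : Module.Dual (ZMod p) M, ψ m ≠ 0 := by
      by_contra! h
      exact hm (Subtype.ext ((Module.forall_dual_apply_eq_zero_iff _ _).mp h))
    exact ⟨ψ.toAddMonoidHom.comp N.subtype, fun h => hψ (DFunLike.congr_fun h m)⟩
  have : Finite (N →+ ZMod p) := Finite.of_injective _ DFunLike.coe_injective
  have hcard : p ∣ Nat.card (N →+ ZMod p) := by
    have : addOrderOf χ₀ = p := addOrderOf_eq_prime (by ext; simp) hχ₀
    simpa [this] using addOrderOf_dvd_natCard χ₀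
  obtain ⟨χ, hχfix, hχ⟩ :=
    hG.exists_fixed_point_of_prime_dvd_card_of_fixed_point _ hcard (a := 0) fun g => by ext; rfl
  have hχρ (g : Γ) (hg : g ∈ G) (m : M) (hm : m ∈ N) :
      χ ⟨ρ g m, hN g hg m hm⟩ = χ ⟨m, hm⟩ := by
    rw [← DFunLike.congr_fun (hχfix ⟨g, hg⟩⁻¹) ⟨m, hm⟩]
    show χ _ = χ (act _ _)
    rw [inv_inv]
    rfl
  intro hle
  refine hχ (AddMonoidHom.ext fun ⟨m, hm⟩ => ?_).symm
  suffices N ≤ χ.ker.map N.subtype by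
    obtain ⟨m', hm', rfl⟩ := this hm
    exact hm'
  refine hle.trans (AddSubgroup.closure_le _ |>.mpr ?_)
  rintro _ ⟨g, hg, m, hm, rfl⟩
  refine ⟨⟨_, hN g hg m hm⟩ - ⟨m, hm⟩, ?_, rfl⟩
  rw [SetLike.mem_coe, AddMonoidHom.mem_ker, map_sub, hχρ g hg m hm, sub_self]

end ZModModule

section JordanBlock

variable {K V : Type*} [Field K] [AddCommGroup V] [Module K V]

theorem dual_apply_pow_apply {L : ℕ} {φ : ℕ → Module.Dual K V} {D : Module.End K V}
    (hφ₀ : ∀ v, φ 0 (D v) = 0) (hφ : ∀ j v, j + 1 < L → φ (j + 1) (D v) = φ j v)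
    (m : V) (s J : ℕ) (hJ : J < L) :
    φ J ((D ^ s) m) = if s ≤ J then φ (J - s) m else 0 := by
  induction s generalizing J with
  | zero => simp
  | succ s ih =>
    rw [pow_succ', Module.End.mul_apply]
    cases J with
    | zero => simp [hφ₀]
    | succ J =>
      rw [hφ _ _ hJ, ih J (by omega)]
      simp

/-- The hypotheses say that `D` is a single nilpotent Jordan block whose layers are detected by
`φ 0, …, φ (L - 1)`. -/
theorem mem_span_pow_succ_apply_of_forall_le_eq_zero {L k : ℕ} {φ : ℕ → Module.Dual K V}
    {D : Module.End K V} (hφ₀ : ∀ v, φ 0 (D v) = 0)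
    (hφ : ∀ j v, j + 1 < L → φ (j + 1) (D v) = φ j v)
    (hsep : ∀ v, (∀ j < L, φ j v = 0) → v = 0)
    {m : V} (hm : ∀ j < k, φ j m = 0) (hmk : φ k m ≠ 0)
    {v : V} (hv : ∀ j ≤ k, φ j v = 0) :
    v ∈ Submodule.span K (Set.range fun s => (D ^ (s + 1)) m) := by
  set S := Submodule.span K (Set.range fun s => (D ^ (s + 1)) m)
  suffices key : ∀ t J, L - J = t → k < J → ∀ v, (∀ j < J, φ j v = 0) → v ∈ S from
    key _ (k + 1) rfl k.lt_succ_self v fun j hj => hv j (Nat.lt_succ_iff.mp hj)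
  intro t
  induction t with
  | zero =>
    intro J hJ _ v hv
    rw [hsep v fun j hj => hv j (by omega)]
    exact S.zero_mem
  | succ t ih =>
    intro J hJ hkJ v hv
    obtain ⟨s, rfl⟩ : ∃ s, J = k + (s + 1) := ⟨J - k - 1, by omega⟩
    have hw := dual_apply_pow_apply hφ₀ hφ m (s + 1)
    set c := φ (k + (s + 1)) v / φ k m
    have hsub : ∀ j < k + (s + 1) + 1, φ j (v - c • (D ^ (s + 1)) m) = 0 := by
      intro j hj
      rw [map_sub, map_smul, hw j (by omega), smul_eq_mul]
      rcases Nat.lt_succ_iff_lt_or_eq.mp hj with hj' | rfl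
      · split_ifs with h
        · rw [hv j hj', hm _ (by omega), mul_zero, sub_zero]
        · rw [hv j hj', mul_zero, sub_zero]
      · rw [if_pos (by omega), Nat.add_sub_cancel, div_mul_cancel₀ _ hmk, sub_self]
    have := ih _ (by omega) (by omega) _ hsub
    simpa using S.add_mem this (S.smul_mem c (Submodule.subset_span ⟨s, rfl⟩))

end JordanBlock

section Binomial

variable {R : Type*} [Semiring R]

theorem eq_zero_of_sum_choose_mul_eq_zero {L : ℕ} {g : ℕ → R}
    (h : ∀ j < L, ∑ a ∈ range L, (a.choose j : R) * g a = 0) {a : ℕ} (ha : a < L) :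
    g a = 0 := by
  induction hd : L - a using Nat.strong_induction_on generalizing a with
  | _ d ih =>
    have := h a ha
    rwa [Finset.sum_eq_single_of_mem a (mem_range.mpr ha), Nat.choose_self, Nat.cast_one,
      one_mul] at this
    intro b hb hba
    rcases lt_or_gt_of_ne hba with hlt | hgt
    · rw [Nat.choose_eq_zero_of_lt hlt, Nat.cast_zero, zero_mul]
    · rw [ih (L - b) (by omega) (mem_range.mp hb) rfl, mul_zero]

/-- The boundary terms of the shifted sum vanish because `C(0, j + 1) = 0` and
`C(L, j + 1) = 0` in `R`. -/
theorem sum_range_choose_succ_mul_shift {L j : ℕ} (hL : (L.choose (j + 1) : R) = 0)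
    {F G : ℕ → R} (hGF : ∀ a, G (a + 1) = F a) :
    ∑ a ∈ range L, (a.choose (j + 1) : R) * G a =
      ∑ a ∈ range L, (a.choose (j + 1) : R) * F a +
        ∑ a ∈ range L, (a.choose j : R) * F a := by
  have h := Finset.sum_range_succ' (fun a => (a.choose (j + 1) : R) * G a) L
  rw [Finset.sum_range_succ, hL, zero_mul, add_zero] at h
  simp only [h, Nat.choose_succ_succ', hGF, Nat.choose_zero_succ, Nat.cast_zero, zero_mul,
    add_zero, Nat.cast_add, add_mul, Finset.sum_add_distrib]
  exact add_comm _ _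

end Binomial

theorem Nat.forall_lt_dvd_div_pow_iff {x : ℕ} (s : ℕ) :
    (∀ l < s, p ∣ x / p ^ l) ↔ p ^ s ∣ x := by
  induction s with
  | zero => simp
  | succ s ih =>
    rw [Nat.forall_lt_succ_right, ih]
    constructor
    · rintro ⟨hs, hdiv⟩
      simpa [pow_succ] using Nat.mul_dvd_of_dvd_div hs hdiv
    · intro h
      have hs : p ^ s ∣ x := (pow_dvd_pow p s.le_succ).trans h
      refine ⟨hs, ?_⟩
      rwa [Nat.dvd_div_iff_mul_dvd hs, ← pow_succ]

section Triangular

variable {A : Type*} [AddCommGroup A]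

variable (n A) in
def triangularPerms : Subgroup (Perm (Fin n → A)) where
  carrier := {g | ∀ j μ ν, (∀ l < j, μ l = ν l) → g μ j - μ j = g ν j - ν j}
  one_mem' _ _ _ _ := by simp
  mul_mem' {g h} hg hh j μ ν hμν := by
    have hagree : ∀ l < j, h μ l = h ν l := fun l hl => by
      have := hh l μ ν fun l' hl' => hμν l' (hl'.trans hl)
      rwa [hμν l hl, sub_left_inj] at this
    simpa using congrArg₂ (· + ·) (hg j _ _ hagree) (hh j μ ν hμν)
  inv_mem' {g} hg j μ ν hμν := by
    have hagree : ∀ l < j, g⁻¹ μ l = g⁻¹ ν l := by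
      intro l
      induction l using WellFoundedLT.induction with
      | _ l ih =>
        intro hl
        have := hg l _ _ fun l' hl' => ih l' hl' (hl'.trans hl)
        simp only [Perm.coe_inv, Equiv.apply_symm_apply, hμν l hl, sub_right_inj] at this ⊢
        exact this
    have := hg j _ _ hagree
    simp only [Perm.coe_inv, Equiv.apply_symm_apply] at this ⊢
    simpa only [neg_sub] using congrArg Neg.neg this

theorem pow_apply_of_mem_triangularPerms {h : Perm (Fin n → A)} (hh : h ∈ triangularPerms n A)
    {j : Fin n} (hfix : ∀ μ, ∀ l < j, h μ l = μ l) (k : ℕ) (μ : Fin n → A) :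
    (∀ l < j, (h ^ k) μ l = μ l) ∧ (h ^ k) μ j = μ j + k • (h μ j - μ j) := by
  induction k with
  | zero => simp
  | succ k ih =>
    rw [pow_succ', Perm.mul_apply]
    refine ⟨fun l hl => (hfix _ l hl).trans (ih.1 l hl), ?_⟩
    rw [← sub_add_cancel (h _ j) ((h ^ k) μ j), hh j _ μ ih.1, ih.2, succ_nsmul]
    abel

theorem pow_eq_one_of_mem_triangularPerms (hA : ∀ a : A, p • a = 0)
    {g : Perm (Fin n → A)} (hg : g ∈ triangularPerms n A) : g ^ p ^ n = 1 := by
  suffices ∀ s ≤ n, ∀ μ, ∀ l : Fin n, (l : ℕ) < s → (g ^ p ^ s) μ l = μ l from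
    Equiv.ext fun μ => funext fun l => this n le_rfl μ l l.isLt
  intro s
  induction s with
  | zero => simp
  | succ s ih =>
    intro hs μ l hl
    have hfix : ∀ μ, ∀ l < (⟨s, hs⟩ : Fin n), (g ^ p ^ s) μ l = μ l :=
      fun μ l hl => ih (Nat.le_of_succ_le hs) μ l hl
    obtain ⟨hlow, hs⟩ := pow_apply_of_mem_triangularPerms (pow_mem hg _) hfix p μ
    rw [pow_succ, pow_mul]
    rcases Nat.lt_succ_iff_lt_or_eq.mp hl with hl | hl
    · exact hlow l hl
    · rw [show l = ⟨s, _⟩ from Fin.ext hl, hs, hA, add_zero]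

theorem isPGroup_triangularPerms (hA : ∀ a : A, p • a = 0) :
    IsPGroup p (triangularPerms n A) :=
  fun g => ⟨n, Subtype.ext (pow_eq_one_of_mem_triangularPerms hA g.2)⟩

end Triangular

theorem sigmaPerm_apply_self (i : Fin n) (μ : Fin n → ZMod p) :
    sigmaPerm p n i μ i = if ∀ j < i, μ j = 0 then μ i + 1 else μ i := by
  simp [sigmaPerm, sigmaFun]

theorem sigmaPerm_mem_triangularPerms (i : Fin n) :
    sigmaPerm p n i ∈ triangularPerms n (ZMod p) := by
  intro j μ ν hμν
  show sigmaFun p n i μ j - μ j = sigmaFun p n i ν j - ν j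
  by_cases hj : j = i
  · subst hj
    have : (∀ l < j, μ l = 0) ↔ (∀ l < j, ν l = 0) :=
      forall₂_congr fun l hl => by rw [hμν l hl]
    simp only [sigmaFun, true_and, this]
    split_ifs <;> ring
  · rw [sigmaFun_apply_ne p n i μ hj, sigmaFun_apply_ne p n i ν hj, sub_self, sub_self]

theorem isPGroup_PSyl : IsPGroup p (PSyl p n) := by
  refine (isPGroup_triangularPerms (n := n) fun a : ZMod p => ?_).to_le ?_
  · rw [nsmul_eq_mul, ZMod.natCast_self, zero_mul]
  · rw [PSyl, Subgroup.closure_le]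
    rintro _ ⟨i, rfl⟩
    exact sigmaPerm_mem_triangularPerms i

variable (p n) in
/-- The cast to `ZMod p` reduces `a / p ^ i` mod `p`, so these are the base-`p` digits of `a`,
least significant first. -/
def baseDigits (a : ℕ) : Fin n → ZMod p := fun i => ((a / p ^ (i : ℕ) : ℕ) : ZMod p)

variable (p n) in
def carryPerm : ℕ → Perm (Fin n → ZMod p)
  | 0 => 1
  | s + 1 => (if h : s < n then sigmaPerm p n ⟨s, h⟩ else 1) * carryPerm s

variable (p n) in
def odometer : Perm (Fin n → ZMod p) := carryPerm p n n

theorem baseDigits_eq_zero_iff {a : ℕ} {i : Fin n} :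
    baseDigits p n a i = 0 ↔ p ∣ a / p ^ (i : ℕ) :=
  ZMod.natCast_eq_zero_iff _ _

theorem carryPerm_baseDigits (a : ℕ) {s : ℕ} (hs : s ≤ n) (l : Fin n) :
    carryPerm p n s (baseDigits p n a) l =
      baseDigits p n (if (l : ℕ) < s then a + 1 else a) l := by
  induction s generalizing l with
  | zero => simp [carryPerm]
  | succ s ih =>
    have hsn : s < n := hs
    have ih := ih hsn.le
    rw [carryPerm, dif_pos hsn, Perm.mul_apply]
    by_cases hl : (l : ℕ) = s
    · obtain rfl : l = ⟨s, hsn⟩ := Fin.ext hl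
      have hcarry : (∀ j < (⟨s, hsn⟩ : Fin n), carryPerm p n s (baseDigits p n a) j = 0) ↔
          p ^ s ∣ a + 1 := by
        rw [← Nat.forall_lt_dvd_div_pow_iff]
        refine ⟨fun h l hl => ?_, fun h j hj => ?_⟩
        · have := h ⟨l, hl.trans hsn⟩ hl
          rwa [ih, if_pos hl, baseDigits_eq_zero_iff] at this
        · rw [ih, if_pos (Fin.lt_def.mp hj), baseDigits_eq_zero_iff]
          exact h j hj
      rw [sigmaPerm_apply_self, if_congr hcarry rfl rfl, ih, if_neg (lt_irrefl s),
        if_pos s.lt_succ_self]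
      simp only [baseDigits, Nat.succ_div]
      split_ifs <;> push_cast <;> ring
    · show sigmaFun p n _ _ _ = _
      rw [sigmaFun_apply_ne p n _ _ (Fin.ne_of_val_ne hl), ih]
      congr 2
      simp only [Nat.lt_succ_iff_lt_or_eq, hl, or_false]

theorem odometer_baseDigits (a : ℕ) :
    odometer p n (baseDigits p n a) = baseDigits p n (a + 1) := by
  ext l
  rw [odometer, carryPerm_baseDigits a le_rfl, if_pos l.isLt]

theorem carryPerm_mem_PSyl (s : ℕ) : carryPerm p n s ∈ PSyl p n := by
  induction s with
  | zero => exact one_mem _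
  | succ s ih =>
    refine mul_mem ?_ ih
    split
    · exact Subgroup.subset_closure (Set.mem_range_self _)
    · exact one_mem _

theorem odometer_mem_PSyl : odometer p n ∈ PSyl p n := carryPerm_mem_PSyl n

theorem exists_lt_pow_baseDigits_eq (hp : 0 < p) (μ : Fin n → ZMod p) :
    ∃ a < p ^ n, baseDigits p n a = μ := by
  have : NeZero p := ⟨hp.ne'⟩
  let a := finFunctionFinEquiv (fun i => (⟨(μ i).val, ZMod.val_lt _⟩ : Fin p))
  refine ⟨a, a.isLt, funext fun i => ?_⟩
  have h := finFunctionFinEquiv_symm_apply_val a i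
  rw [Equiv.symm_apply_apply] at h
  rw [baseDigits, ← ZMod.natCast_mod, ← h, ZMod.natCast_zmod_val]

theorem baseDigits_pow_self (hp : 0 < p) : baseDigits p n (p ^ n) = baseDigits p n 0 := by
  ext i
  rw [baseDigits, baseDigits, Nat.zero_div, Nat.cast_zero, Nat.pow_div i.isLt.le hp,
    Nat.cast_pow, ZMod.natCast_self, zero_pow (Nat.sub_ne_zero_of_lt i.isLt)]

variable (p n) in
def permRep :
    Representation (ZMod p) (Perm (Fin n → ZMod p)) ((Fin n → ZMod p) → ZMod p) where
  toFun g := LinearMap.funLeft (ZMod p) (ZMod p) g.symm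
  map_one' := rfl
  map_mul' _ _ := rfl

variable (p n) in
def odometerSubOne : Module.End (ZMod p) ((Fin n → ZMod p) → ZMod p) :=
  permRep p n (odometer p n) - 1

variable (p n) in
def binomialFunctional (j : ℕ) : Module.Dual (ZMod p) ((Fin n → ZMod p) → ZMod p) :=
  ∑ a ∈ range (p ^ n), (a.choose j : ZMod p) • LinearMap.proj (baseDigits p n a)

theorem odometerSubOne_apply (f : (Fin n → ZMod p) → ZMod p) :
    odometerSubOne p n f = permAddAut p n (odometer p n) f - f :=
  rfl

theorem binomialFunctional_apply (j : ℕ) (f : (Fin n → ZMod p) → ZMod p) :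
    binomialFunctional p n j f =
      ∑ a ∈ range (p ^ n), (a.choose j : ZMod p) * f (baseDigits p n a) := by
  simp [binomialFunctional]

theorem permAddAut_odometer_baseDigits_succ (f : (Fin n → ZMod p) → ZMod p) (a : ℕ) :
    permAddAut p n (odometer p n) f (baseDigits p n (a + 1)) = f (baseDigits p n a) := by
  show f _ = _
  rw [← odometer_baseDigits, Equiv.symm_apply_apply]

theorem binomialFunctional_zero_odometerSubOne (hp : 0 < p) (f : (Fin n → ZMod p) → ZMod p) :
    binomialFunctional p n 0 (odometerSubOne p n f) = 0 := by
  set G := fun a => permAddAut p n (odometer p n) f (baseDigits p n a)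
  have h := Finset.sum_range_succ' G (p ^ n)
  rw [Finset.sum_range_succ] at h
  simp only [G, permAddAut_odometer_baseDigits_succ, baseDigits_pow_self hp,
    add_left_inj] at h
  simp [binomialFunctional_apply, odometerSubOne_apply, Finset.sum_sub_distrib, h]

theorem binomialFunctional_succ_odometerSubOne (hp : p.Prime) (j : ℕ)
    (f : (Fin n → ZMod p) → ZMod p) (hj : j + 1 < p ^ n) :
    binomialFunctional p n (j + 1) (odometerSubOne p n f) = binomialFunctional p n j f := by
  have hL : ((p ^ n).choose (j + 1) : ZMod p) = 0 :=
    (ZMod.natCast_eq_zero_iff _ _).mpr (hp.dvd_choose_pow j.succ_ne_zero hj.ne)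
  simp only [odometerSubOne_apply, map_sub, binomialFunctional_apply,
    sum_range_choose_succ_mul_shift
      (G := fun a => permAddAut p n (odometer p n) f (baseDigits p n a))
      hL (permAddAut_odometer_baseDigits_succ f), add_sub_cancel_left]

theorem eq_zero_of_forall_binomialFunctional_eq_zero (hp : 0 < p)
    {f : (Fin n → ZMod p) → ZMod p} (h : ∀ j < p ^ n, binomialFunctional p n j f = 0) :
    f = 0 := by
  funext μ
  obtain ⟨a, ha, rfl⟩ := exists_lt_pow_baseDigits_eq hp μ
  exact eq_zero_of_sum_choose_mul_eq_zero (g := fun a => f (baseDigits p n a))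
    (fun j hj => by simpa [binomialFunctional_apply] using h j hj) ha

theorem exists_min_binomialFunctional_ne_zero (hp : 0 < p)
    {N : AddSubgroup ((Fin n → ZMod p) → ZMod p)} (hN : N ≠ ⊥) :
    ∃ k, ∃ m ∈ N, binomialFunctional p n k m ≠ 0 ∧
      ∀ j < k, ∀ m ∈ N, binomialFunctional p n j m = 0 := by
  classical
  have hex : ∃ k, ∃ m ∈ N, binomialFunctional p n k m ≠ 0 := by
    obtain ⟨⟨m, hmN⟩, hm⟩ := N.ne_bot_iff_exists_ne_zero.mp hN
    by_contra! h
    exact hm (Subtype.ext (eq_zero_of_forall_binomialFunctional_eq_zero hp fun j _ => h j m hmN))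
  obtain ⟨m, hm, hk⟩ := Nat.find_spec hex
  exact ⟨_, m, hm, hk, fun j hj m hm => by_contra fun h => Nat.find_min hex hj ⟨m, hm, h⟩⟩

theorem pow_odometerSubOne_apply_mem {N : AddSubgroup ((Fin n → ZMod p) → ZMod p)}
    (hN : ∀ g ∈ PSyl p n, ∀ m ∈ N, permAddAut p n g m ∈ N)
    {m : (Fin n → ZMod p) → ZMod p} (hm : m ∈ N) (s : ℕ) : (odometerSubOne p n ^ s) m ∈ N := by
  induction s with
  | zero => exact hm
  | succ s ih =>
    rw [pow_succ', Module.End.mul_apply, odometerSubOne_apply]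
    exact sub_mem (hN _ odometer_mem_PSyl _ ih) ih

theorem pow_succ_odometerSubOne_apply_mem_closure {N : AddSubgroup ((Fin n → ZMod p) → ZMod p)}
    (hN : ∀ g ∈ PSyl p n, ∀ m ∈ N, permAddAut p n g m ∈ N)
    {m : (Fin n → ZMod p) → ZMod p} (hm : m ∈ N) (s : ℕ) : (odometerSubOne p n ^ (s + 1)) m ∈
      AddSubgroup.closure {x | ∃ g ∈ PSyl p n, ∃ m ∈ N, x = permAddAut p n g m - m} := by
  refine AddSubgroup.subset_closure
    ⟨_, odometer_mem_PSyl, _, pow_odometerSubOne_apply_mem hN hm s, ?_⟩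
  rw [pow_succ', Module.End.mul_apply, odometerSubOne_apply]

theorem perm_module_uniserial_general (hp : p.Prime) :
    (∀ N : AddSubgroup ((Fin n → ZMod p) → ZMod p), N ≠ ⊥ →
      (∀ g ∈ PSyl p n, AddSubgroup.map (permAddAut p n g).toAddMonoidHom N = N) →
      (AddSubgroup.closure
        {x | ∃ g ∈ PSyl p n, ∃ m ∈ N, x = permAddAut p n g m - m}).relIndex N = p) ∧
    Nat.card ((Fin n → ZMod p) → ZMod p) = p ^ p ^ n := by
  have := Fact.mk hp
  refine ⟨fun N hN hInv => ?_, by simp⟩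
  have hstable : ∀ g ∈ PSyl p n, ∀ m ∈ N, permAddAut p n g m ∈ N :=
    fun g hg m hm => hInv g hg ▸ AddSubgroup.mem_map_of_mem _ hm
  obtain ⟨k, m₀, hm₀, hk, hlow⟩ := exists_min_binomialFunctional_ne_zero hp.pos hN
  refine AddSubgroup.relIndex_eq_of_le_of_not_le hp (AddSubgroup.relIndex_ker_inf_eq _ hm₀ hk) ?_
    (not_le_closure_sub_of_isPGroup (permRep p n) isPGroup_PSyl hstable hN)
  rintro v ⟨hvk, hvN⟩
  refine (AddSubgroup.mem_toZModSubmodule p).mp <| Submodule.span_le.mpr ?_ <|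
    mem_span_pow_succ_apply_of_forall_le_eq_zero (binomialFunctional_zero_odometerSubOne hp.pos)
      (binomialFunctional_succ_odometerSubOne hp)
      (fun _ => eq_zero_of_forall_binomialFunctional_eq_zero hp.pos)
      (fun j hj => hlow j hj m₀ hm₀) hk (v := v) fun j hj => ?_
  · rintro _ ⟨s, rfl⟩
    exact pow_succ_odometerSubOne_apply_mem_closure hstable hm₀ s
  · rcases hj.lt_or_eq with hj | rfl
    · exact hlow j hj v hvN
    · exact hvk

/-- The natural permutation action of `P_n` on the `F_p`-vector space with basis
`F_p^n` is uniserial of length `p^n`: for every nontrivial `P_n`-invariant additive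
subgroup `N`, the subgroup `[P_n, N]` has index `p` in `N`; and the module has
cardinality `p ^ (p ^ n)` (i.e. `F_p`-dimension `p ^ n`). -/
theorem perm_module_uniserial (hp : p.Prime) (hn : 1 ≤ n) :
    (∀ N : AddSubgroup ((Fin n → ZMod p) → ZMod p), N ≠ ⊥ →
      (∀ g ∈ PSyl p n, AddSubgroup.map (permAddAut p n g).toAddMonoidHom N = N) →
      (AddSubgroup.closure
        {x | ∃ g ∈ PSyl p n, ∃ m ∈ N, x = permAddAut p n g m - m}).relIndex N = p) ∧
    Nat.card ((Fin n → ZMod p) → ZMod p) = p ^ p ^ n :=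
  perm_module_uniserial_general hp
end
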